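/- arXiv:1709.02431 — 5 statements merged into one kernel-verified Lean document; each statement's English description precedes it below -/
import Mathlib

section
/- Let f be a continuous self-map of a metric space (M, d_M) and let y be a non-wandering point of f. Then for every η > 0 there exist a point x in the open ball B(y,η) and an integer k ≥ 1 such that f^k(x) ∈ B(y,η) and, setting ρ = d_M(x, f^k(x)), for every j with 1 ≤ j ≤ k−1 the point f^j(x) lies neither in B(x, (3/4)ρ) nor in B(f^k(x), (3/4)ρ). -/
private lemma closing_aux {M : Type*} [MetricSpace M]
    (f : M → M) (y : M) (η : ℝ) :
    ∀ k : ℕ, 1 ≤ k → ∀ x : M, ∀ ε : ℝ, dist x y < ε → dist (f^[k] x) y < ε →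
      ε + 3 * dist x (f^[k] x) ≤ η →
      ∃ x' ∈ Metric.ball y η, ∃ k' : ℕ, 1 ≤ k' ∧ f^[k'] x' ∈ Metric.ball y η ∧
        ∀ j : ℕ, 1 ≤ j → j < k' →
          f^[j] x' ∉ Metric.ball x' (3 / 4 * dist x' (f^[k'] x')) ∧
          f^[j] x' ∉ Metric.ball (f^[k'] x') (3 / 4 * dist x' (f^[k'] x')) := by
  intro k
  induction k using Nat.strong_induction_on with
  | _ k ih =>
    intro hk x ε hx hfx hεη
    have hρ : (0:ℝ) ≤ dist x (f^[k] x) := dist_nonneg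
    by_cases hgood : ∀ j : ℕ, 1 ≤ j → j < k →
        f^[j] x ∉ Metric.ball x (3 / 4 * dist x (f^[k] x)) ∧
        f^[j] x ∉ Metric.ball (f^[k] x) (3 / 4 * dist x (f^[k] x))
    · exact ⟨x, by simp only [Metric.mem_ball]; linarith, k, hk,
        by simp only [Metric.mem_ball]; linarith, hgood⟩
    · push_neg at hgood
      obtain ⟨j, hj1, hjk, hcase⟩ := hgood
      by_cases hmem : f^[j] x ∈ Metric.ball x (3 / 4 * dist x (f^[k] x))
      · -- f^j x ∈ B(x, 3/4 ρ): shorten to the pair (x, j)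
        rw [Metric.mem_ball] at hmem
        have hd : dist x (f^[j] x) < 3 / 4 * dist x (f^[k] x) := by
          rw [dist_comm]; exact hmem
        refine ih j hjk hj1 x (ε + 3 / 4 * dist x (f^[k] x)) (by linarith) ?_ (by linarith)
        calc dist (f^[j] x) y ≤ dist (f^[j] x) x + dist x y := dist_triangle _ _ _
          _ < 3 / 4 * dist x (f^[k] x) + ε := by linarith [hmem]
          _ = ε + 3 / 4 * dist x (f^[k] x) := by ring
      · -- f^j x ∈ B(f^k x, 3/4 ρ): shorten to the pair (f^j x, k - j)
        have hmem' := hcase hmem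
        rw [Metric.mem_ball] at hmem'
        have hiter : f^[k - j] (f^[j] x) = f^[k] x := by
          rw [← Function.iterate_add_apply, Nat.sub_add_cancel hjk.le]
        have h1 : 1 ≤ k - j := by omega
        have h2 : k - j < k := by omega
        refine ih (k - j) h2 h1 (f^[j] x) (ε + 3 / 4 * dist x (f^[k] x)) ?_ ?_ ?_
        · calc dist (f^[j] x) y ≤ dist (f^[j] x) (f^[k] x) + dist (f^[k] x) y :=
              dist_triangle _ _ _
            _ < 3 / 4 * dist x (f^[k] x) + ε := by linarith [hmem']
            _ = ε + 3 / 4 * dist x (f^[k] x) := by ring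
        · rw [hiter]; linarith
        · rw [hiter]; linarith

/-- **Fundamental lemma for non-wandering points**: if `y` is a non-wandering point of the
continuous self-map `f` of a metric space `M`, then for every `η > 0` there exist
`x ∈ B(y,η)` and `k ≥ 1` with `f^k x ∈ B(y,η)` such that, with `ρ = dist x (f^k x)`, no
intermediate orbit point `f^j x` (`1 ≤ j ≤ k-1`) lies in `B(x, 3/4·ρ)` or in
`B(f^k x, 3/4·ρ)`. -/
theorem nonwandering_closing_lemma {M : Type*} [MetricSpace M]
    (f : M → M) (hf : Continuous f) (y : M)
    (hy : ∀ U : Set M, IsOpen U → y ∈ U → ∃ n : ℕ, 1 ≤ n ∧ (f^[n] '' U ∩ U).Nonempty) :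
    ∀ η > (0 : ℝ), ∃ x ∈ Metric.ball y η, ∃ k : ℕ, 1 ≤ k ∧ f^[k] x ∈ Metric.ball y η ∧
      ∀ j : ℕ, 1 ≤ j → j < k →
        f^[j] x ∉ Metric.ball x (3 / 4 * dist x (f^[k] x)) ∧
        f^[j] x ∉ Metric.ball (f^[k] x) (3 / 4 * dist x (f^[k] x)) := by
  intro η hη
  obtain ⟨n, hn1, w, ⟨z, hz, hw⟩, hwU⟩ :=
    hy (Metric.ball y (η / 7)) Metric.isOpen_ball (by simp [Metric.mem_ball]; linarith)
  rw [Metric.mem_ball] at hz hwU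
  subst hw
  have hρ : dist z (f^[n] z) < 2 * (η / 7) := by
    calc dist z (f^[n] z) ≤ dist z y + dist y (f^[n] z) := dist_triangle _ _ _
      _ < 2 * (η / 7) := by rw [dist_comm y]; linarith
  exact closing_aux f y η n hn1 z (η / 7) hz hwU (by linarith)
end

section
/- Let (Ω,d_Ω) and (Ω',d_{Ω'}) be metric spaces with Ω geodesically convex. Let Ω₁, Ω₂, … be geodesically convex, pairwise disjoint open subdomains of Ω and set Ω₀ = Ω ∖ ⋃_k Ω_k. Let f : Ω → Ω' be continuous and suppose the restrictions of f to Ω₀ and to the closure (in Ω) of each Ω_k, k ≥ 1, are Lipschitz. Then f is Lipschitz, with Lipschitz constant [f]_{Lip,Ω} ≤ sup_{k=0,1,2,…} [f]_{Lip,cl(Ω_k)} (where cl(Ω₀) = Ω₀). -/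
open scoped ENNReal NNReal

/-- The `α`-Hölder seminorm of `f` on the set `s`, valued in `ℝ≥0∞`; for `α = 1` this is the
Lipschitz constant `[f]_{Lip,s}`. -/
noncomputable def eHolderOn {X : Type*} [PseudoEMetricSpace X] {Y : Type*} [PseudoEMetricSpace Y]
    (α : ℝ) (f : X → Y) (s : Set X) : ℝ≥0∞ :=
  ⨆ (x : X) (_ : x ∈ s) (y : X) (_ : y ∈ s) (_ : x ≠ y), edist (f x) (f y) / edist x y ^ α

/-- A subset `A` of a metric space is geodesically convex if any two of its points are
joined by a geodesic (an isometric image of a compact real interval) contained in `A`. -/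
def GeodesicallyConvex {X : Type*} [MetricSpace X] (A : Set X) : Prop :=
  ∀ x ∈ A, ∀ y ∈ A, ∃ γ : ℝ → X, γ 0 = x ∧ γ (dist x y) = y ∧
    (∀ t ∈ Set.Icc (0 : ℝ) (dist x y), γ t ∈ A) ∧
    ∀ s ∈ Set.Icc (0 : ℝ) (dist x y), ∀ t ∈ Set.Icc (0 : ℝ) (dist x y),
      dist (γ s) (γ t) = |s - t|

/-! Join `x` to `y` by a geodesic `γ` of length `d` and let `a ≤ b` be the first and last times
at which `γ` meets `Ω₀ = X ∖ ⋃ Ω_k`. Then `γ(a), γ(b) ∈ Ω₀`, while `γ` maps `(0, a)` and `(b, d)`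
into `⋃ Ω_k`; being connected, each of these arcs stays in a single `Ω_k`, so its endpoints lie
in `cl Ω_k`. Hence `d(f x, f y)` is at most `L a + L (b - a) + L (d - b) = L d`, with `L` the
supremum of the local Lipschitz constants. If `γ` never meets `Ω₀`, the whole geodesic lies in
one `Ω_k`. -/

open Set

section eHolderOn

variable {X Y : Type*} [MetricSpace X] [PseudoEMetricSpace Y] {f : X → Y} {s : Set X}

lemma edist_le_eHolderOn_one_mul {p q : X} (hp : p ∈ s) (hq : q ∈ s) :
    edist (f p) (f q) ≤ eHolderOn 1 f s * edist p q := by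
  rcases eq_or_ne p q with rfl | hne
  · simp
  have hratio : edist (f p) (f q) / edist p q ^ (1 : ℝ) ≤ eHolderOn 1 f s :=
    le_iSup₂_of_le p hp (le_iSup₂_of_le q hq (le_iSup_of_le hne le_rfl))
  rw [ENNReal.rpow_one] at hratio
  exact (ENNReal.div_le_iff_le_mul (Or.inl (edist_pos.2 hne).ne')
    (Or.inl (edist_ne_top p q))).1 hratio

lemma eHolderOn_one_le_of_edist_le {L : ℝ≥0∞}
    (h : ∀ x ∈ s, ∀ y ∈ s, edist (f x) (f y) ≤ L * edist x y) : eHolderOn 1 f s ≤ L := by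
  refine iSup₂_le fun x hx => iSup₂_le fun y hy => iSup_le fun hxy => ?_
  rw [ENNReal.rpow_one, ENNReal.div_le_iff_le_mul (Or.inl (edist_pos.2 hxy).ne')
    (Or.inl (edist_ne_top x y))]
  exact h x hx y hy

end eHolderOn

lemma IsPreconnected.subset_of_subset_iUnion_of_pairwise_disjoint {X ι : Type*}
    [TopologicalSpace X] {Ωs : ι → Set X} (hopen : ∀ k, IsOpen (Ωs k))
    (hdisj : Pairwise (Function.onFun Disjoint Ωs)) {T : Set X} (hT : IsPreconnected T)
    (hsub : T ⊆ ⋃ k, Ωs k) {k : ι} {p : X} (hp : p ∈ T) (hpk : p ∈ Ωs k) : T ⊆ Ωs k := by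
  refine hT.subset_left_of_subset_union (hopen k)
    (isOpen_iUnion fun j : {j // j ≠ k} => hopen j)
    (disjoint_iUnion_right.2 fun j => hdisj j.2.symm) (fun q hq => ?_) ⟨p, hp, hpk⟩
  obtain ⟨j, hj⟩ := mem_iUnion.1 (hsub hq)
  rcases eq_or_ne j k with rfl | hjk
  · exact Or.inl hj
  · exact Or.inr (mem_iUnion.2 ⟨⟨j, hjk⟩, hj⟩)

lemma exists_mem_closure_of_image_Ioo_subset_iUnion {X ι : Type*} [TopologicalSpace X]
    {Ωs : ι → Set X} (hopen : ∀ k, IsOpen (Ωs k))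
    (hdisj : Pairwise (Function.onFun Disjoint Ωs)) {γ : ℝ → X} {s t : ℝ} (hst : s < t)
    (hγ : ContinuousOn γ (Icc s t))
    (hsub : γ '' Ioo s t ⊆ ⋃ k, Ωs k) :
    ∃ k, γ s ∈ closure (Ωs k) ∧ γ t ∈ closure (Ωs k) := by
  obtain ⟨u, hu⟩ : (Ioo s t).Nonempty := nonempty_Ioo.2 hst
  obtain ⟨k, hk⟩ := mem_iUnion.1 (hsub (mem_image_of_mem γ hu))
  have harc : γ '' Ioo s t ⊆ Ωs k :=
    (isPreconnected_Ioo.image γ (hγ.mono Ioo_subset_Icc_self))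
      |>.subset_of_subset_iUnion_of_pairwise_disjoint hopen hdisj hsub (mem_image_of_mem γ hu) hk
  have hends : γ '' Icc s t ⊆ closure (Ωs k) := by
    rw [← closure_Ioo hst.ne] at hγ ⊢
    exact hγ.image_closure.trans (closure_mono harc)
  exact ⟨k, hends (mem_image_of_mem γ (left_mem_Icc.2 hst.le)),
    hends (mem_image_of_mem γ (right_mem_Icc.2 hst.le))⟩

section Gluing

variable {X Y ι : Type*} [MetricSpace X] [PseudoEMetricSpace Y] {f : X → Y} {Ωs : ι → Set X}
  {L : ℝ≥0∞}

lemma edist_le_of_image_Ioo_subset_iUnion (hopen : ∀ k, IsOpen (Ωs k))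
    (hdisj : Pairwise (Function.onFun Disjoint Ωs))
    (hLk : ∀ k, eHolderOn 1 f (closure (Ωs k)) ≤ L) {γ : ℝ → X} {s t : ℝ} (hst : s ≤ t)
    (hγ : ContinuousOn γ (Icc s t)) (hsub : γ '' Ioo s t ⊆ ⋃ k, Ωs k) :
    edist (f (γ s)) (f (γ t)) ≤ L * edist (γ s) (γ t) := by
  rcases hst.eq_or_lt with rfl | hst
  · simp
  obtain ⟨k, hs, ht⟩ := exists_mem_closure_of_image_Ioo_subset_iUnion hopen hdisj hst hγ hsub
  exact (edist_le_eHolderOn_one_mul hs ht).trans (mul_le_mul_left (hLk k) _)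

lemma edist_le_mul_length_of_geodesic (hopen : ∀ k, IsOpen (Ωs k))
    (hdisj : Pairwise (Function.onFun Disjoint Ωs))
    (hL0 : eHolderOn 1 f (univ \ ⋃ k, Ωs k) ≤ L)
    (hLk : ∀ k, eHolderOn 1 f (closure (Ωs k)) ≤ L) {γ : ℝ → X} {d : ℝ} (hd : 0 ≤ d)
    (hγ : ∀ s ∈ Icc 0 d, ∀ t ∈ Icc 0 d, dist (γ s) (γ t) = |s - t|) :
    edist (f (γ 0)) (f (γ d)) ≤ L * ENNReal.ofReal d := by
  have hcont : ContinuousOn γ (Icc 0 d) :=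
    (LipschitzOnWith.of_dist_le_mul (K := 1) fun s hs t ht => by
      simp [hγ s hs t ht, Real.dist_eq]).continuousOn
  have hedist : ∀ s t, 0 ≤ s → s ≤ t → t ≤ d → edist (γ s) (γ t) = ENNReal.ofReal (t - s) :=
    fun s t h0s hst htd => by
      rw [edist_dist, hγ s ⟨h0s, hst.trans htd⟩ t ⟨h0s.trans hst, htd⟩, abs_sub_comm,
        abs_of_nonneg (sub_nonneg.2 hst)]
  set S := Icc 0 d ∩ γ ⁻¹' (⋃ k, Ωs k)ᶜ
  have piece : ∀ s t, 0 ≤ s → s ≤ t → t ≤ d → Disjoint (Ioo s t) S →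
      edist (f (γ s)) (f (γ t)) ≤ L * ENNReal.ofReal (t - s) := fun s t h0s hst htd hS => by
    have hsub : Ioo s t ⊆ Icc 0 d := Ioo_subset_Icc_self.trans (Icc_subset_Icc h0s htd)
    rw [← hedist s t h0s hst htd]
    exact edist_le_of_image_Ioo_subset_iUnion hopen hdisj hLk hst
      (hcont.mono (Icc_subset_Icc h0s htd))
      (image_subset_iff.2 fun u hu => not_not.1 fun h => disjoint_left.1 hS hu ⟨hsub hu, h⟩)
  rcases S.eq_empty_or_nonempty with hS | hS
  · simpa using piece 0 d le_rfl hd le_rfl (by simp [hS])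
  have hScompact : IsCompact S := isCompact_Icc.of_isClosed_subset
    (hcont.preimage_isClosed_of_isClosed isClosed_Icc (isOpen_iUnion hopen).isClosed_compl)
    inter_subset_left
  obtain ⟨a, haS, ha⟩ := hScompact.exists_isLeast hS
  obtain ⟨b, hbS, hb⟩ := hScompact.exists_isGreatest hS
  have hab : a ≤ b := ha hbS
  have hleft := piece 0 a le_rfl haS.1.1 haS.1.2
    (disjoint_left.2 fun u hu huS => (ha huS).not_gt hu.2)
  have hright := piece b d hbS.1.1 hbS.1.2 le_rfl
    (disjoint_left.2 fun u hu huS => (hb huS).not_gt hu.1)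
  have hmiddle : edist (f (γ a)) (f (γ b)) ≤ L * ENNReal.ofReal (b - a) := by
    rw [← hedist a b haS.1.1 hab hbS.1.2]
    exact (edist_le_eHolderOn_one_mul (s := univ \ ⋃ k, Ωs k) ⟨trivial, haS.2⟩
      ⟨trivial, hbS.2⟩).trans (mul_le_mul_left hL0 _)
  calc edist (f (γ 0)) (f (γ d))
      ≤ edist (f (γ 0)) (f (γ a)) + edist (f (γ a)) (f (γ b)) + edist (f (γ b)) (f (γ d)) :=
        edist_triangle4 _ _ _ _
    _ ≤ L * ENNReal.ofReal (a - 0) + L * ENNReal.ofReal (b - a) + L * ENNReal.ofReal (d - b) :=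
        add_le_add (add_le_add hleft hmiddle) hright
    _ = L * ENNReal.ofReal d := by
        rw [← mul_add, ← mul_add, ← ENNReal.ofReal_add (by linarith [haS.1.1]) (by linarith),
          ← ENNReal.ofReal_add (by linarith [haS.1.1]) (by linarith [hbS.1.2])]
        ring_nf

end Gluing

theorem lipschitz_gluing_general {X Y : Type*} [MetricSpace X] [MetricSpace Y]
    (hX : GeodesicallyConvex (Set.univ : Set X))
    (Ωs : ℕ → Set X) (hopen : ∀ k, IsOpen (Ωs k))
    (hdisj : Pairwise (Function.onFun Disjoint Ωs))
    (f : X → Y) :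
    eHolderOn 1 f Set.univ ≤
      max (eHolderOn 1 f (Set.univ \ ⋃ k, Ωs k)) (⨆ k, eHolderOn 1 f (closure (Ωs k))) := by
  refine eHolderOn_one_le_of_edist_le fun x _ y _ => ?_
  obtain ⟨γ, hγ0, hγd, -, hγ⟩ := hX x trivial y trivial
  have hglue := edist_le_mul_length_of_geodesic hopen hdisj (le_max_left _ _)
    (fun k => (le_iSup (fun k => eHolderOn 1 f (closure (Ωs k))) k).trans (le_max_right _ _))
    dist_nonneg hγ
  rwa [hγ0, hγd, ← edist_dist] at hglue

/-- **Lipschitz gluing principle**: let `X` be a geodesically convex metric space,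
`Ω₁, Ω₂, …` geodesically convex pairwise disjoint open subdomains, and
`Ω₀ = X ∖ ⋃ Ω_k`.  If `f : X → Y` is continuous and Lipschitz on `Ω₀` and on the closure of
each `Ω_k`, then `f` is Lipschitz with `[f]_Lip ≤ sup_{k = 0,1,2,…} [f]_{Lip, cl Ω_k}`. -/
theorem lipschitz_gluing {X Y : Type*} [MetricSpace X] [MetricSpace Y]
    (hX : GeodesicallyConvex (Set.univ : Set X))
    (Ωs : ℕ → Set X) (hopen : ∀ k, IsOpen (Ωs k)) (hconv : ∀ k, GeodesicallyConvex (Ωs k))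
    (hdisj : Pairwise (Function.onFun Disjoint Ωs))
    (f : X → Y) (hf : Continuous f)
    (hlip0 : eHolderOn 1 f (Set.univ \ ⋃ k, Ωs k) ≠ ⊤)
    (hlipk : ∀ k, eHolderOn 1 f (closure (Ωs k)) ≠ ⊤) :
    eHolderOn 1 f Set.univ ≤
      max (eHolderOn 1 f (Set.univ \ ⋃ k, Ωs k)) (⨆ k, eHolderOn 1 f (closure (Ωs k))) :=
  lipschitz_gluing_general hX Ωs hopen hdisj f
end

section
/- For every c > 0 there exists a constant K > 0, depending only on c and the dimension d, with the following property: for all p, q ∈ ℝ^d and all 0 < r₁ < r₂ with |p − q|/(r₂ − r₁) ≤ c, there exists an orientation-preserving C¹ diffeomorphism φ of ℝ^d such that φ(p) = q, the support of φ is contained in the closure of the elongated neighbourhood E(p,q;r₂), and max([φ − id]_{Lip}, [φ⁻¹ − id]_{Lip}) < K. -/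
/-!
The point is moved along the segment `[p, q]` in `N` equal steps, with `N ≈ 2 M c` for a Lipschitz
constant `M` of `Real.smoothTransition`. Each step is `x ↦ x + χ x • v` with `v = (q - p) / N` and
`χ` a radial bump equal to `1` at the current point and vanishing outside the `r₂`-ball around it.
The displacement `χ • v` is `1/2`-Lipschitz, so the step is a `C¹` diffeomorphism whose
displacements `φ - id` and `φ⁻¹ - id` are `1`-Lipschitz. Composing maps with `K₁`- and
`K₂`-Lipschitz displacements gives a `(K₁ + K₂ + K₁ K₂)`-Lipschitz displacement, so the `N`-fold
composition has constant `2 ^ N - 1`, which depends only on `c`.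
-/

/-- The elongated neighbourhood `E(p,q;r)`: the set of points of `ℝ^d` whose distance to the
closed segment `[p,q]` is less than `r`. -/
def elongNbhd {d : ℕ} (p q : EuclideanSpace ℝ (Fin d)) (r : ℝ) :
    Set (EuclideanSpace ℝ (Fin d)) :=
  {x | ∃ t ∈ Set.Icc (0 : ℝ) 1, dist x (t • p + (1 - t) • q) < r}

open NNReal Set Function Metric

theorem isUnit_one_add_of_norm_lt_one {R : Type*} [NormedRing R] [HasSummableGeomSeries R] {x : R}
    (h : ‖x‖ < 1) : IsUnit (1 + x) := by
  simpa using isUnit_one_sub_of_norm_lt_one (x := -x) (by simpa using h)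

section SeminormedAddCommGroup

variable {E : Type*} [SeminormedAddCommGroup E]

theorem LipschitzWith.comp_sub_self {K₁ K₂ : ℝ≥0} {φ₁ φ₂ : E → E}
    (h₁ : LipschitzWith K₁ fun x ↦ φ₁ x - x) (h₂ : LipschitzWith K₂ fun x ↦ φ₂ x - x) :
    LipschitzWith (K₁ + K₂ + K₁ * K₂) fun x ↦ φ₂ (φ₁ x) - x := by
  have hφ₁ : LipschitzWith (K₁ + 1) φ₁ := by simpa using h₁.add LipschitzWith.id
  have := (h₂.comp hφ₁).add h₁
  simp only [comp_apply, sub_add_sub_cancel] at this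
  exact this.weaken (le_of_eq (by ring))

end SeminormedAddCommGroup

section NormedSpace

variable {E : Type*} [NormedAddCommGroup E] [NormedSpace ℝ E]

theorem ContinuousLinearMap.det_one_add_pos [CompleteSpace E] {T : E →L[ℝ] E} (hT : ‖T‖ < 1) :
    0 < (1 + T).det := by
  -- `det (1 + A)` does not vanish on the connected unit ball and equals `1` at `A = 0`.
  have hne : ∀ A ∈ ball (0 : E →L[ℝ] E) 1, (1 + A).det ≠ 0 := fun A hA ↦
    (LinearMap.isUnit_det _ ((isUnit_one_add_of_norm_lt_one (mem_ball_zero_iff.1 hA)).map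
      ContinuousLinearMap.toLinearMapRingHom)).ne_zero
  by_contra! hle
  obtain ⟨A, hA, hA0⟩ := (convex_ball (0 : E →L[ℝ] E) 1).isPreconnected.intermediate_value
    (mem_ball_zero_iff.2 hT) (mem_ball_self one_pos)
    ((ContinuousLinearMap.continuous_det.comp (continuous_const_add 1)).continuousOn)
    ⟨hle, by simp [ContinuousLinearMap.det]⟩
  exact hne A hA hA0

structure IsPerturbation (K : ℝ≥0) (S : Set E) (φ ψ : E → E) : Prop where
  contDiff : ContDiff ℝ 1 φ
  contDiff_inv : ContDiff ℝ 1 ψ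
  leftInverse : LeftInverse ψ φ
  rightInverse : RightInverse ψ φ
  det_fderiv_pos : ∀ x, 0 < (fderiv ℝ φ x).det
  eq_self_of_notMem : ∀ x ∉ S, φ x = x
  lipschitzWith_sub : LipschitzWith K fun x ↦ φ x - x
  lipschitzWith_inv_sub : LipschitzWith K fun x ↦ ψ x - x

namespace IsPerturbation

variable {K K₁ K₂ : ℝ≥0} {S : Set E} {φ ψ φ₁ ψ₁ φ₂ ψ₂ : E → E}

theorem id (S : Set E) : IsPerturbation 0 S (id : E → E) id where
  contDiff := contDiff_id
  contDiff_inv := contDiff_id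
  leftInverse := fun _ ↦ rfl
  rightInverse := fun _ ↦ rfl
  det_fderiv_pos := fun x ↦ by simp [fderiv_id, ContinuousLinearMap.det]
  eq_self_of_notMem := fun _ _ ↦ rfl
  lipschitzWith_sub := by simp
  lipschitzWith_inv_sub := by simp

theorem comp (h₁ : IsPerturbation K₁ S φ₁ ψ₁) (h₂ : IsPerturbation K₂ S φ₂ ψ₂) :
    IsPerturbation (K₁ + K₂ + K₁ * K₂) S (φ₂ ∘ φ₁) (ψ₁ ∘ ψ₂) where
  contDiff := h₂.contDiff.comp h₁.contDiff
  contDiff_inv := h₁.contDiff_inv.comp h₂.contDiff_inv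
  leftInverse := h₂.leftInverse.comp h₁.leftInverse
  rightInverse := h₂.rightInverse.comp h₁.rightInverse
  det_fderiv_pos := fun x ↦ by
    rw [fderiv_comp x (h₂.contDiff.differentiable one_ne_zero _)
      (h₁.contDiff.differentiable one_ne_zero _)]
    exact (LinearMap.det_comp _ _).trans_gt (mul_pos (h₂.det_fderiv_pos _) (h₁.det_fderiv_pos x))
  eq_self_of_notMem := fun x hx ↦ by
    simp [h₁.eq_self_of_notMem x hx, h₂.eq_self_of_notMem x hx]
  lipschitzWith_sub := h₁.lipschitzWith_sub.comp_sub_self h₂.lipschitzWith_sub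
  lipschitzWith_inv_sub := by
    simpa only [add_comm K₁, mul_comm K₁, comp_apply] using
      h₂.lipschitzWith_inv_sub.comp_sub_self h₁.lipschitzWith_inv_sub

theorem mono (h : IsPerturbation K S φ ψ) {K' : ℝ≥0} {S' : Set E} (hK : K ≤ K') (hS : S ⊆ S') :
    IsPerturbation K' S' φ ψ :=
  { h with
    eq_self_of_notMem := fun x hx ↦ h.eq_self_of_notMem x (fun h' ↦ hx (hS h'))
    lipschitzWith_sub := h.lipschitzWith_sub.weaken hK
    lipschitzWith_inv_sub := h.lipschitzWith_inv_sub.weaken hK }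

end IsPerturbation

theorem exists_isPerturbation_of_chain {S : Set E} (a : ℕ → E) (n : ℕ)
    (h : ∀ k < n, ∃ φ ψ, IsPerturbation 1 S φ ψ ∧ φ (a k) = a (k + 1)) :
    ∃ φ ψ, IsPerturbation (2 ^ n - 1) S φ ψ ∧ φ (a 0) = a n := by
  induction n with
  | zero => exact ⟨id, id, by simpa using IsPerturbation.id S, rfl⟩
  | succ n ih =>
    obtain ⟨Φ, Ψ, hΦ, hΦa⟩ := ih fun k hk ↦ h k (hk.trans n.lt_succ_self)
    obtain ⟨φ, ψ, hφ, hφa⟩ := h n n.lt_succ_self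
    refine ⟨φ ∘ Φ, Ψ ∘ ψ, (hΦ.comp hφ).mono (le_of_eq ?_) subset_rfl, by simp [hΦa, hφa]⟩
    have h2n : (2 : ℝ≥0) ^ n = 2 ^ n - 1 + 1 :=
      (tsub_add_cancel_of_le (one_le_pow₀ one_le_two)).symm
    refine eq_tsub_of_add_eq ?_
    generalize (2 : ℝ≥0) ^ n - 1 = m at h2n ⊢
    rw [pow_succ, h2n]
    ring

theorem exists_isPerturbation_add [CompleteSpace E] {g : E → E} {L : ℝ≥0} {S : Set E}
    (hg : ContDiff ℝ 1 g) (hgL : LipschitzWith L g) (hL : L < 1) (hgS : ∀ x ∉ S, g x = 0) :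
    ∃ ψ, IsPerturbation (L / (1 - L)) S (fun x ↦ x + g x) ψ := by
  set φ : E → E := fun x ↦ x + g x
  have hφ : ContDiff ℝ 1 φ := contDiff_id.add hg
  have hφ' : ∀ x, HasFDerivAt φ (1 + fderiv ℝ g x) x := fun x ↦
    (hasFDerivAt_id x).add ((hg.differentiable one_ne_zero) x).hasFDerivAt
  have hgD : ∀ x, ‖fderiv ℝ g x‖ < 1 := fun x ↦ (norm_fderiv_le_of_lipschitz ℝ hgL).trans_lt hL
  have happrox : ApproximatesLinearOn φ ((ContinuousLinearEquiv.refl ℝ E : E →L[ℝ] E)) univ L :=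
    fun x _ y _ ↦ by simpa [φ, add_sub_add_comm] using hgL.norm_sub_le x y
  have hc : Subsingleton E ∨ L < ‖((ContinuousLinearEquiv.refl ℝ E).symm : E →L[ℝ] E)‖₊⁻¹ := by
    rcases subsingleton_or_nontrivial E with hE | hE
    exacts [.inl hE, .inr (by simpa using hL)]
  set H := happrox.toHomeomorph φ hc
  have hunit : ∀ x, IsUnit (1 + fderiv ℝ g x) := fun x ↦ isUnit_one_add_of_norm_lt_one (hgD x)
  have hψ : ContDiff ℝ 1 H.symm :=
    H.contDiff_symm (f₀' := fun x ↦ ContinuousLinearEquiv.unitsEquiv ℝ E (hunit x).unit)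
      (fun x ↦ hφ' x) hφ
  have hanti : AntilipschitzWith (1 - L)⁻¹ φ := by
    simpa using AntilipschitzWith.id.add_lipschitzWith hgL (by simpa using hL)
  have hψL : LipschitzWith (1 - L)⁻¹ H.symm := hanti.to_rightInverse H.right_inv
  refine ⟨H.symm, hφ, hψ, H.left_inv, H.right_inv, fun x ↦ ?_, fun x hx ↦ by simp [φ, hgS x hx],
    ?_, ?_⟩
  · rw [(hφ' x).fderiv]
    exact ContinuousLinearMap.det_one_add_pos (hgD x)
  · simp only [φ, add_sub_cancel_left]
    refine hgL.weaken ?_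
    rw [le_div_iff₀ (tsub_pos_of_lt hL)]
    exact mul_le_of_le_one_right' tsub_le_self
  · have hsub : (fun y ↦ H.symm y - y) = -(g ∘ H.symm) := funext fun y ↦ by
      have h : H.symm y + g (H.symm y) = y := H.right_inv y
      nth_rewrite 2 [← h]
      simp
    rw [hsub, div_eq_mul_inv]
    exact (hgL.comp hψL).neg

end NormedSpace

section RadialBump

theorem Real.exists_lipschitzWith_smoothTransition : ∃ M, LipschitzWith M smoothTransition := by
  -- `smoothTransition` factors through the projection onto `[0, 1]`, where it is `C¹`.
  obtain ⟨M, hM⟩ := (smoothTransition.contDiff (n := 1)).contDiffOn.exists_lipschitzOnWith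
    one_ne_zero (convex_Icc (0 : ℝ) 1) isCompact_Icc
  refine ⟨M * 1, ?_⟩
  have := (lipschitzOnWith_iff_restrict.mp hM).comp (LipschitzWith.projIcc zero_le_one)
  convert this using 1
  ext x
  simp

variable {E : Type*} [NormedAddCommGroup E]

noncomputable def radialBump (a : E) (r₁ r₂ : ℝ) (x : E) : ℝ :=
  Real.smoothTransition ((r₂ - ‖x - a‖) / (r₂ - r₁))

variable {a x : E} {r₁ r₂ : ℝ}

theorem radialBump_eq_one (hr : r₁ < r₂) (hx : ‖x - a‖ ≤ r₁) : radialBump a r₁ r₂ x = 1 :=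
  Real.smoothTransition.one_of_one_le <| (one_le_div (sub_pos.2 hr)).2 (by linarith)

theorem radialBump_eq_zero (hr : r₁ ≤ r₂) (hx : r₂ ≤ ‖x - a‖) : radialBump a r₁ r₂ x = 0 :=
  Real.smoothTransition.zero_of_nonpos <| div_nonpos_of_nonpos_of_nonneg (by linarith) (by linarith)

theorem dist_radialBump_le {M : ℝ≥0} (hM : LipschitzWith M Real.smoothTransition) (hr : r₁ < r₂)
    (x y : E) : dist (radialBump a r₁ r₂ x) (radialBump a r₁ r₂ y) ≤ M / (r₂ - r₁) * dist x y := by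
  have hr' : 0 < r₂ - r₁ := sub_pos.2 hr
  calc dist (radialBump a r₁ r₂ x) (radialBump a r₁ r₂ y)
      ≤ M * dist ((r₂ - ‖x - a‖) / (r₂ - r₁)) ((r₂ - ‖y - a‖) / (r₂ - r₁)) := hM.dist_le_mul _ _
    _ = M / (r₂ - r₁) * |‖y - a‖ - ‖x - a‖| := by
      rw [Real.dist_eq, div_sub_div_same, sub_sub_sub_cancel_left, abs_div, abs_of_pos hr']; ring
    _ ≤ M / (r₂ - r₁) * dist x y := by
      gcongr
      simpa [dist_eq_norm, norm_sub_rev x y] using abs_norm_sub_norm_le (y - a) (x - a)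

theorem contDiff_radialBump [InnerProductSpace ℝ E] {n : ℕ∞} (hr₁ : 0 < r₁) (hr : r₁ < r₂) :
    ContDiff ℝ n (radialBump a r₁ r₂) := by
  refine contDiff_iff_contDiffAt.2 fun x ↦ ?_
  rcases lt_or_ge ‖x - a‖ r₁ with hx | hx
  · have hone : radialBump a r₁ r₂ =ᶠ[nhds x] fun _ ↦ 1 := by
      filter_upwards [(isOpen_lt (continuous_id.sub continuous_const).norm
        continuous_const).mem_nhds hx] with y hy using radialBump_eq_one hr hy.le
    exact contDiffAt_const.congr_of_eventuallyEq hone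
  · have hxa : x - a ≠ 0 := fun h ↦ by rw [h, norm_zero] at hx; linarith
    exact Real.smoothTransition.contDiffAt.comp x <|
      (contDiffAt_const.sub ((contDiffAt_norm ℝ hxa).comp x
        (contDiffAt_id.sub contDiffAt_const))).div_const _

end RadialBump

section InnerProductSpace

variable {E : Type*} [NormedAddCommGroup E] [InnerProductSpace ℝ E] [CompleteSpace E]

theorem exists_isPerturbation_ball {M : ℝ≥0} (hM : LipschitzWith M Real.smoothTransition)
    {b b' : E} {r₁ r₂ : ℝ} (hr₁ : 0 < r₁) (hr : r₁ < r₂) (hbb' : 2 * M * dist b b' ≤ r₂ - r₁) :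
    ∃ φ ψ, IsPerturbation 1 (ball b r₂) φ ψ ∧ φ b = b' := by
  set g : E → E := fun x ↦ radialBump b r₁ r₂ x • (b' - b)
  have hcoef : M / (r₂ - r₁) * dist b b' ≤ 2⁻¹ := by
    rw [div_mul_eq_mul_div, div_le_iff₀ (sub_pos.2 hr)]
    linarith
  have hg : LipschitzWith 2⁻¹ g := LipschitzWith.of_dist_le_mul fun x y ↦ by
    calc dist (g x) (g y) = dist (radialBump b r₁ r₂ x) (radialBump b r₁ r₂ y) * dist b b' := by
          simp only [g, dist_eq_norm, ← sub_smul, norm_smul, Real.norm_eq_abs, norm_sub_rev b']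
      _ ≤ M / (r₂ - r₁) * dist x y * dist b b' := by gcongr; exact dist_radialBump_le hM hr x y
      _ ≤ 2⁻¹ * dist x y := by rw [mul_right_comm]; gcongr
  have hgS : ∀ x ∉ ball b r₂, g x = 0 := fun x hx ↦ by
    simp [g, radialBump_eq_zero hr.le (by simpa [dist_eq_norm] using hx)]
  obtain ⟨ψ, hψ⟩ := exists_isPerturbation_add (g := g)
    ((contDiff_radialBump hr₁ hr).smul contDiff_const) hg (by norm_num) hgS
  have hK : (2⁻¹ : ℝ≥0) / (1 - 2⁻¹) = 1 := by
    rw [show (1 : ℝ≥0) - 2⁻¹ = 2⁻¹ by rw [tsub_eq_iff_eq_add_of_le (by norm_num)]; norm_num,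
      div_self (by norm_num)]
  refine ⟨_, ψ, hK ▸ hψ, ?_⟩
  have hb : radialBump b r₁ r₂ b = 1 := radialBump_eq_one hr (by simpa using hr₁.le)
  simp [g, hb]

end InnerProductSpace

theorem dist_lineMap_natCast_div {V : Type*} [NormedAddCommGroup V] [NormedSpace ℝ V] (p q : V)
    (k N : ℕ) :
    dist (AffineMap.lineMap p q ((k : ℝ) / N)) (AffineMap.lineMap p q (((k + 1 : ℕ) : ℝ) / N)) =
      dist p q / N := by
  rw [dist_lineMap_lineMap, Real.dist_eq, div_sub_div_same, Nat.cast_add_one, sub_add_cancel_left,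
    abs_div, abs_neg, abs_one, Nat.abs_cast, one_div_mul_eq_div]

theorem ball_lineMap_subset_elongNbhd {d : ℕ} {p q : EuclideanSpace ℝ (Fin d)} {t r : ℝ}
    (ht : t ∈ Icc (0 : ℝ) 1) : ball (AffineMap.lineMap p q t) r ⊆ elongNbhd p q r :=
  fun x hx ↦ ⟨1 - t, ⟨by linarith [ht.2], by linarith [ht.1]⟩, by
    rwa [sub_sub_cancel, ← AffineMap.lineMap_apply_module]⟩

theorem exists_isPerturbation_lineMap_step {M : ℝ≥0} (hM : LipschitzWith M Real.smoothTransition)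
    {d : ℕ} {p q : EuclideanSpace ℝ (Fin d)} {r₁ r₂ : ℝ} (hr₁ : 0 < r₁) (hr : r₁ < r₂) {k N : ℕ}
    (hpq : 2 * M * dist p q ≤ (r₂ - r₁) * N) (hk : k < N) :
    ∃ φ ψ, IsPerturbation 1 (elongNbhd p q r₂) φ ψ ∧
      φ (AffineMap.lineMap p q ((k : ℝ) / N)) = AffineMap.lineMap p q (((k + 1 : ℕ) : ℝ) / N) := by
  have hN : (0 : ℝ) < N := by exact_mod_cast (Nat.zero_le k).trans_lt hk
  have hdist : 2 * M * dist (AffineMap.lineMap p q ((k : ℝ) / N))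
      (AffineMap.lineMap p q (((k + 1 : ℕ) : ℝ) / N)) ≤ r₂ - r₁ := by
    rwa [dist_lineMap_natCast_div, mul_div_assoc', div_le_iff₀ hN]
  obtain ⟨φ, ψ, h, hφ⟩ := exists_isPerturbation_ball hM hr₁ hr hdist
  have hk' : (k : ℝ) / N ∈ Icc (0 : ℝ) 1 :=
    ⟨by positivity, div_le_one_of_le₀ (by exact_mod_cast hk.le) hN.le⟩
  exact ⟨φ, ψ, h.mono le_rfl (ball_lineMap_subset_elongNbhd hk'), hφ⟩

theorem moving_perturbation_general (d : ℕ) (c : ℝ) :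
    ∃ K : ℝ, 0 < K ∧
      ∀ (p q : EuclideanSpace ℝ (Fin d)) (r₁ r₂ : ℝ), 0 < r₁ → r₁ < r₂ →
        dist p q ≤ c * (r₂ - r₁) →
        ∃ φ ψ : EuclideanSpace ℝ (Fin d) → EuclideanSpace ℝ (Fin d),
          ContDiff ℝ 1 φ ∧ ContDiff ℝ 1 ψ ∧
          Function.LeftInverse ψ φ ∧ Function.RightInverse ψ φ ∧
          (∀ x, 0 < (fderiv ℝ φ x).det) ∧
          φ p = q ∧
          closure {x | φ x ≠ x} ⊆ closure (elongNbhd p q r₂) ∧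
          (∀ x y, ‖(φ x - x) - (φ y - y)‖ ≤ K * dist x y) ∧
          (∀ x y, ‖(ψ x - x) - (ψ y - y)‖ ≤ K * dist x y) := by
  obtain ⟨M, hM⟩ := Real.exists_lipschitzWith_smoothTransition
  set N : ℕ := ⌈2 * M * c⌉₊ + 1
  have hN : 2 * M * c ≤ N := (Nat.le_ceil _).trans (by simp [N])
  refine ⟨2 ^ N, by positivity, fun p q r₁ r₂ hr₁ hr hpq ↦ ?_⟩
  have hpq' : 2 * M * dist p q ≤ (r₂ - r₁) * N := by
    calc 2 * M * dist p q ≤ 2 * M * c * (r₂ - r₁) := by rw [mul_assoc _ c]; gcongr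
      _ ≤ (r₂ - r₁) * N := by rw [mul_comm]; gcongr
  set a : ℕ → EuclideanSpace ℝ (Fin d) := fun k ↦ AffineMap.lineMap p q ((k : ℝ) / N)
  obtain ⟨φ, ψ, h, hφ⟩ := exists_isPerturbation_of_chain a N fun k hk ↦
    exists_isPerturbation_lineMap_step hM hr₁ hr hpq' hk
  replace h := h.mono tsub_le_self subset_rfl
  refine ⟨φ, ψ, h.contDiff, h.contDiff_inv, h.leftInverse, h.rightInverse, h.det_fderiv_pos,
    by simpa [a] using hφ, closure_mono fun x hx ↦ by_contra (hx ∘ h.eq_self_of_notMem x),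
    fun x y ↦ ?_, fun x y ↦ ?_⟩
  · simpa [dist_eq_norm] using h.lipschitzWith_sub.dist_le_mul x y
  · simpa [dist_eq_norm] using h.lipschitzWith_inv_sub.dist_le_mul x y

/-- **Perturbation moving a point**: for every `c > 0` there is `K > 0`, depending only on
`c` and `d`, such that for all `p, q ∈ ℝ^d` and `0 < r₁ < r₂` with
`|p - q| / (r₂ - r₁) ≤ c`, there is an orientation-preserving `C¹` diffeomorphism `φ` of
`ℝ^d` with `φ p = q`, support contained in `cl (E(p,q;r₂))`, and
`max ([φ - id]_Lip, [φ⁻¹ - id]_Lip) < K`. -/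
theorem moving_perturbation (d : ℕ) (c : ℝ) (hc : 0 < c) :
    ∃ K : ℝ, 0 < K ∧
      ∀ (p q : EuclideanSpace ℝ (Fin d)) (r₁ r₂ : ℝ), 0 < r₁ → r₁ < r₂ →
        dist p q ≤ c * (r₂ - r₁) →
        ∃ φ ψ : EuclideanSpace ℝ (Fin d) → EuclideanSpace ℝ (Fin d),
          ContDiff ℝ 1 φ ∧ ContDiff ℝ 1 ψ ∧
          Function.LeftInverse ψ φ ∧ Function.RightInverse ψ φ ∧
          (∀ x, 0 < (fderiv ℝ φ x).det) ∧
          φ p = q ∧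
          closure {x | φ x ≠ x} ⊆ closure (elongNbhd p q r₂) ∧
          (∀ x y, ‖(φ x - x) - (φ y - y)‖ ≤ K * dist x y) ∧
          (∀ x y, ‖(ψ x - x) - (ψ y - y)‖ ≤ K * dist x y) :=
  moving_perturbation_general d c
end

section
/- There exists a constant K > 0, depending only on the dimension d ≥ 2, with the following property: whenever C and C' are isometric rigid solid cylinders both contained in a Euclidean ball B(p,r) ⊂ ℝ^d, there exists a C¹ diffeomorphism φ of ℝ^d whose support is contained in B(p,10r), which maps C isometrically onto C', and which satisfies [φ]_{Lip} ≤ K. -/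
/-- The rigid solid cylinder `C(a,b;ρ)` in `ℝ^d`:
`{(a+b)/2 + (s/2)•(b-a) + v : s ∈ (-1,1), v ⊥ (b-a), ‖v‖ < ρ}`. -/
def rigidCyl {d : ℕ} (a b : EuclideanSpace ℝ (Fin d)) (ρ : ℝ) :
    Set (EuclideanSpace ℝ (Fin d)) :=
  {x | ∃ (s : ℝ) (v : EuclideanSpace ℝ (Fin d)), |s| < 1 ∧ (inner ℝ v (b - a) : ℝ) = 0 ∧
    ‖v‖ < ρ ∧ x = midpoint ℝ a b + (s / 2) • (b - a) + v}

/-!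
By Mazur–Ulam the target cylinder is `C(ι a, ι b; ρ)`, which is also the image of `C(a, b; ρ)`
under `x ↦ m' + R (x - m)`, where `m, m'` are the midpoints of the axes and `R` is a rotation in a
2-plane taking `b - a` to `ι b - ι a`. A rotation `R_α` about a point `q` is realised near `q` by
the twist `x ↦ q + R_{α χ(x)} (x - q)`, with `χ` a radial cutoff equal to `1` on `B(q, 3r)` and
to `0` off `B(q, 7r)`. The twist is a `C¹` diffeomorphism, inverted by the twist with angle
`-α χ`, and for `|α| ≤ π` it is `(1 + 14πk)`-Lipschitz, `k` being the Lipschitz constant of the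
cutoff profile: the bound does not depend on `q` or `r` because `χ` is `k/r`-Lipschitz and the
angle only varies within distance `7r` of `q`. The rotation about `m` is one twist. The
translation by `m' - m` is two more: a rotation `S` about `m` with `S (m' - m) = m - m'`,
followed by `S⁻¹` about the midpoint of `m m'`.
-/

open Real Metric Set Function
open scoped RealInnerProductSpace NNReal

noncomputable section

section PlaneRotation

variable {E : Type*} [NormedAddCommGroup E] [InnerProductSpace ℝ E] {v : Fin 2 → E}

def planeRotationMap (v : Fin 2 → E) (θ : ℝ) : E →ₗ[ℝ] E where
  toFun z := z + (cos θ - 1) • (⟪v 0, z⟫ • v 0 + ⟪v 1, z⟫ • v 1) +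
    sin θ • (⟪v 0, z⟫ • v 1 - ⟪v 1, z⟫ • v 0)
  map_add' z w := by simp only [inner_add_right, add_smul]; module
  map_smul' t z := by simp only [inner_smul_right, mul_smul, RingHom.id_apply]; module

theorem planeRotationMap_apply (θ : ℝ) (z : E) :
    planeRotationMap v θ z = z + (cos θ - 1) • (⟪v 0, z⟫ • v 0 + ⟪v 1, z⟫ • v 1) +
      sin θ • (⟪v 0, z⟫ • v 1 - ⟪v 1, z⟫ • v 0) := rfl

theorem planeRotationMap_zero : planeRotationMap v 0 = LinearMap.id := by
  ext z
  simp [planeRotationMap_apply]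

theorem Orthonormal.inner_fin_two (hv : Orthonormal ℝ v) :
    ⟪v 0, v 0⟫ = 1 ∧ ⟪v 1, v 1⟫ = 1 ∧ ⟪v 0, v 1⟫ = 0 ∧ ⟪v 1, v 0⟫ = 0 := by
  have h := orthonormal_iff_ite.mp hv
  exact ⟨by simpa using h 0 0, by simpa using h 1 1, by simpa using h 0 1, by simpa using h 1 0⟩

theorem planeRotationMap_planeRotationMap (hv : Orthonormal ℝ v) (α β : ℝ) (z : E) :
    planeRotationMap v α (planeRotationMap v β z) = planeRotationMap v (α + β) z := by
  obtain ⟨h00, h11, h01, h10⟩ := hv.inner_fin_two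
  simp only [planeRotationMap_apply, inner_add_right, inner_sub_right, inner_smul_right,
    h00, h11, h01, h10, cos_add, sin_add]
  module

theorem inner_planeRotationMap (hv : Orthonormal ℝ v) (θ : ℝ) (z w : E) :
    ⟪planeRotationMap v θ z, planeRotationMap v θ w⟫ = ⟪z, w⟫ := by
  obtain ⟨h00, h11, h01, h10⟩ := hv.inner_fin_two
  simp only [planeRotationMap_apply, inner_add_left, inner_add_right, inner_sub_left,
    inner_sub_right, real_inner_smul_left, real_inner_smul_right, h00, h11, h01, h10]
  rw [real_inner_comm z (v 0), real_inner_comm z (v 1)]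
  linear_combination (⟪z, v 0⟫ * ⟪v 0, w⟫ + ⟪z, v 1⟫ * ⟪v 1, w⟫) * cos_sq_add_sin_sq θ

theorem planeRotationMap_comp_neg (hv : Orthonormal ℝ v) (θ : ℝ) :
    (planeRotationMap v θ).comp (planeRotationMap v (-θ)) = .id := by
  ext z
  simp [planeRotationMap_planeRotationMap hv, planeRotationMap_zero]

/-- The rotation by the angle `θ` in the plane spanned by `v 0, v 1`, fixing the orthogonal
complement of that plane. -/
def planeRotation (hv : Orthonormal ℝ v) (θ : ℝ) : E ≃ₗᵢ[ℝ] E :=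
  (LinearEquiv.ofLinearMap (planeRotationMap v θ) (planeRotationMap v (-θ))
    (planeRotationMap_comp_neg hv θ) (by simpa using planeRotationMap_comp_neg hv (-θ))
    ).isometryOfInner (inner_planeRotationMap hv θ)

theorem planeRotation_apply (hv : Orthonormal ℝ v) (θ : ℝ) (z : E) :
    planeRotation hv θ z = z + (cos θ - 1) • (⟪v 0, z⟫ • v 0 + ⟪v 1, z⟫ • v 1) +
      sin θ • (⟪v 0, z⟫ • v 1 - ⟪v 1, z⟫ • v 0) := rfl

theorem planeRotation_symm (hv : Orthonormal ℝ v) (θ : ℝ) :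
    (planeRotation hv θ).symm = planeRotation hv (-θ) :=
  LinearIsometryEquiv.ext fun _ => rfl

theorem planeRotation_planeRotation (hv : Orthonormal ℝ v) (α β : ℝ) (z : E) :
    planeRotation hv α (planeRotation hv β z) = planeRotation hv (α + β) z :=
  planeRotationMap_planeRotationMap hv α β z

theorem planeRotation_zero_apply (hv : Orthonormal ℝ v) (z : E) : planeRotation hv 0 z = z :=
  LinearMap.congr_fun planeRotationMap_zero z

theorem planeRotation_apply_zero (hv : Orthonormal ℝ v) (θ : ℝ) :
    planeRotation hv θ (v 0) = cos θ • v 0 + sin θ • v 1 := by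
  obtain ⟨h00, -, -, h10⟩ := hv.inner_fin_two
  rw [planeRotation_apply, h00, h10]
  module

theorem Orthonormal.norm_smul_add_smul_sq (hv : Orthonormal ℝ v) (a b : ℝ) :
    ‖a • v 0 + b • v 1‖ ^ 2 = a ^ 2 + b ^ 2 := by
  obtain ⟨h00, h11, h01, h10⟩ := hv.inner_fin_two
  rw [← real_inner_self_eq_norm_sq]
  simp only [inner_add_left, inner_add_right, real_inner_smul_left, real_inner_smul_right,
    h00, h11, h01, h10]
  ring

theorem Orthonormal.inner_sq_add_inner_sq_le (hv : Orthonormal ℝ v) (z : E) :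
    ⟪v 0, z⟫ ^ 2 + ⟪v 1, z⟫ ^ 2 ≤ ‖z‖ ^ 2 := by
  simpa [Fin.sum_univ_two] using hv.sum_inner_products_le z (s := Finset.univ)

theorem Orthonormal.norm_smul_add_smul_le (hv : Orthonormal ℝ v) {a b : ℝ} {z : E}
    (h : a ^ 2 + b ^ 2 ≤ ‖z‖ ^ 2) : ‖a • v 0 + b • v 1‖ ≤ ‖z‖ := by
  rw [← sq_le_sq₀ (norm_nonneg _) (norm_nonneg _), hv.norm_smul_add_smul_sq]
  exact h

theorem norm_planeRotation_sub_le (hv : Orthonormal ℝ v) (α β : ℝ) (z : E) :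
    ‖planeRotation hv α z - planeRotation hv β z‖ ≤ 2 * |α - β| * ‖z‖ := by
  have hz := hv.inner_sq_add_inner_sq_le z
  have hP : ‖⟪v 0, z⟫ • v 0 + ⟪v 1, z⟫ • v 1‖ ≤ ‖z‖ := hv.norm_smul_add_smul_le hz
  have hJ : ‖(-⟪v 1, z⟫) • v 0 + ⟪v 0, z⟫ • v 1‖ ≤ ‖z‖ :=
    hv.norm_smul_add_smul_le (by linarith [neg_sq ⟪v 1, z⟫])
  calc ‖planeRotation hv α z - planeRotation hv β z‖
      = ‖(cos α - cos β) • (⟪v 0, z⟫ • v 0 + ⟪v 1, z⟫ • v 1) +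
          (sin α - sin β) • ((-⟪v 1, z⟫) • v 0 + ⟪v 0, z⟫ • v 1)‖ := by
        rw [planeRotation_apply, planeRotation_apply]
        congr 1
        module
    _ ≤ |α - β| * ‖z‖ + |α - β| * ‖z‖ := by
        refine norm_add_le_of_le ?_ ?_ <;> rw [norm_smul, Real.norm_eq_abs]
        exacts [mul_le_mul (abs_cos_sub_cos_le α β) hP (norm_nonneg _) (abs_nonneg _),
          mul_le_mul (abs_sin_sub_sin_le α β) hJ (norm_nonneg _) (abs_nonneg _)]
    _ = 2 * |α - β| * ‖z‖ := by ring

theorem exists_norm_eq_one_smul_eq [Nontrivial E] (z : E) :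
    ∃ e : E, ‖e‖ = 1 ∧ ‖z‖ • e = z := by
  rcases eq_or_ne z 0 with rfl | hz
  · obtain ⟨e, he⟩ := exists_norm_eq E zero_le_one
    exact ⟨e, he, by simp⟩
  · exact ⟨‖z‖⁻¹ • z, norm_smul_inv_norm hz, by simp [smul_smul, hz]⟩

theorem exists_orthonormal_fin_two_smul_eq (hd : 2 ≤ Module.finrank ℝ E) {e w : E}
    (he : ‖e‖ = 1) (hw : ⟪e, w⟫ = 0) : ∃ f : E, Orthonormal ℝ ![e, f] ∧ ‖w‖ • f = w := by
  have : FiniteDimensional ℝ E := Module.finite_of_finrank_pos (by omega)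
  have hK : 0 < Module.finrank ℝ (ℝ ∙ e)ᗮ := by
    have := (ℝ ∙ e).finrank_add_finrank_orthogonal
    rw [finrank_span_singleton (norm_ne_zero_iff.mp (he ▸ one_ne_zero))] at this
    omega
  have : Nontrivial (ℝ ∙ e)ᗮ := Module.nontrivial_of_finrank_pos hK
  obtain ⟨f, hf, hwf⟩ := exists_norm_eq_one_smul_eq
    (⟨w, Submodule.mem_orthogonal_singleton_iff_inner_right.mpr hw⟩ : (ℝ ∙ e)ᗮ)
  refine ⟨f, ?_, congr_arg Subtype.val hwf⟩
  have hf' : ‖(f : E)‖ = 1 := hf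
  have hef : ⟪e, (f : E)⟫ = 0 := Submodule.mem_orthogonal_singleton_iff_inner_right.mp f.2
  rw [orthonormal_iff_ite]
  simp [Fin.forall_fin_two, he, hf', hef, real_inner_comm e]

theorem exists_planeRotation_apply_eq (hd : 2 ≤ Module.finrank ℝ E) {u u' : E}
    (h : ‖u‖ = ‖u'‖) :
    ∃ (v : Fin 2 → E) (hv : Orthonormal ℝ v) (α : ℝ), |α| ≤ π ∧ planeRotation hv α u = u' := by
  have : Nontrivial E := Module.nontrivial_of_finrank_pos (R := ℝ) (by omega)
  obtain ⟨e, he, hue⟩ := exists_norm_eq_one_smul_eq u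
  obtain ⟨e', he', hue'⟩ := exists_norm_eq_one_smul_eq u'
  set c := ⟪e, e'⟫ with hc_def
  have hee : ⟪e, e⟫ = 1 := by rw [real_inner_self_eq_norm_sq, he, one_pow]
  have he'e' : ⟪e', e'⟫ = 1 := by rw [real_inner_self_eq_norm_sq, he', one_pow]
  obtain ⟨f, hf, hwf⟩ := exists_orthonormal_fin_two_smul_eq hd he
    (w := e' - c • e) (by rw [inner_sub_right, real_inner_smul_right, hee, mul_one, sub_self])
  have hc : |c| ≤ 1 := by simpa [he, he'] using abs_real_inner_le_norm e e'
  have hw : ‖e' - c • e‖ = √(1 - c ^ 2) := by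
    rw [← sqrt_sq (norm_nonneg _), ← real_inner_self_eq_norm_sq]
    congr 1
    simp only [inner_sub_left, inner_sub_right, real_inner_smul_left, real_inner_smul_right, hee,
      he'e', real_inner_comm e e', ← hc_def]
    ring
  refine ⟨![e, f], hf, arccos c, by rw [abs_of_nonneg (arccos_nonneg c)]; exact arccos_le_pi c, ?_⟩
  rw [← hue, ← hue', map_smul, ← h]
  congr 1
  have := planeRotation_apply_zero hf (arccos c)
  simp only [Matrix.cons_val_zero, Matrix.cons_val_one] at this
  rw [this, cos_arccos (abs_le.mp hc).1 (abs_le.mp hc).2, sin_arccos, ← hw, hwf]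
  abel

end PlaneRotation

section Twist

variable {E : Type*} [NormedAddCommGroup E] [InnerProductSpace ℝ E] {v : Fin 2 → E}
  (hv : Orthonormal ℝ v) {q : E} {θ : E → ℝ}

def twist (q : E) (θ : E → ℝ) (x : E) : E :=
  q + planeRotation hv (θ x) (x - q)

theorem twist_apply_of_eq {x : E} {α : ℝ} (h : θ x = α) :
    twist hv q θ x = q + planeRotation hv α (x - q) := by
  rw [twist, h]

theorem twist_apply_of_eq_zero {x : E} (h : θ x = 0) : twist hv q θ x = x := by
  rw [twist_apply_of_eq hv h, planeRotation_zero_apply, add_sub_cancel]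

theorem norm_twist_sub (x : E) : ‖twist hv q θ x - q‖ = ‖x - q‖ := by
  rw [twist, add_sub_cancel_left, LinearIsometryEquiv.norm_map]

theorem leftInverse_twist_neg (hθ : ∀ x y, ‖x - q‖ = ‖y - q‖ → θ x = θ y) :
    LeftInverse (twist hv q (-θ)) (twist hv q θ) := fun x => by
  rw [twist, Pi.neg_apply, hθ _ x (norm_twist_sub hv x), twist, add_sub_cancel_left,
    planeRotation_planeRotation, neg_add_cancel, planeRotation_zero_apply, add_sub_cancel]

theorem rightInverse_twist_neg (hθ : ∀ x y, ‖x - q‖ = ‖y - q‖ → θ x = θ y) :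
    RightInverse (twist hv q (-θ)) (twist hv q θ) := by
  have h := leftInverse_twist_neg hv (q := q) (θ := -θ) fun x y h => by simp [hθ x y h]
  rwa [neg_neg] at h

theorem contDiff_twist {n : WithTop ℕ∞} (hθ : ContDiff ℝ n θ) :
    ContDiff ℝ n (twist hv q θ) := by
  have hinner (i : Fin 2) : ContDiff ℝ n fun x => ⟪v i, x - q⟫ :=
    contDiff_const.inner ℝ (contDiff_id.sub contDiff_const)
  unfold twist
  simp only [planeRotation_apply]
  fun_prop

theorem norm_twist_sub_twist_le (x y : E) :
    ‖twist hv q θ x - twist hv q θ y‖ ≤ ‖x - y‖ + 2 * |θ x - θ y| * ‖x - q‖ := by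
  have h : twist hv q θ x - twist hv q θ y =
      planeRotation hv (θ y) (x - y) +
        (planeRotation hv (θ x) (x - q) - planeRotation hv (θ y) (x - q)) := by
    simp only [twist, map_sub]
    abel
  rw [h]
  exact (norm_add_le _ _).trans (add_le_add (LinearIsometryEquiv.norm_map _ _).le
    (norm_planeRotation_sub_le hv _ _ _))

theorem lipschitzWith_twist {L R : ℝ≥0} (hθ : LipschitzWith L θ)
    (hθR : ∀ x, R ≤ ‖x - q‖ → θ x = 0) : LipschitzWith (1 + 2 * L * R) (twist hv q θ) := by
  have near (x y : E) (hx : ‖x - q‖ ≤ R) :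
      ‖twist hv q θ x - twist hv q θ y‖ ≤ (1 + 2 * L * R) * ‖x - y‖ := by
    have hxy : |θ x - θ y| ≤ L * ‖x - y‖ := by
      simpa [Real.dist_eq, dist_eq_norm] using hθ.dist_le_mul x y
    calc ‖twist hv q θ x - twist hv q θ y‖ ≤ ‖x - y‖ + 2 * |θ x - θ y| * ‖x - q‖ :=
          norm_twist_sub_twist_le hv x y
      _ ≤ ‖x - y‖ + 2 * (L * ‖x - y‖) * R := by gcongr
      _ = (1 + 2 * L * R) * ‖x - y‖ := by ring
  refine LipschitzWith.of_dist_le_mul fun x y => ?_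
  rw [dist_eq_norm, dist_eq_norm]
  push_cast
  by_cases hx : ‖x - q‖ ≤ R
  · exact near x y hx
  by_cases hy : ‖y - q‖ ≤ R
  · rw [norm_sub_rev, norm_sub_rev x]
    exact near y x hy
  rw [twist_apply_of_eq_zero hv (hθR x (not_le.mp hx).le),
    twist_apply_of_eq_zero hv (hθR y (not_le.mp hy).le)]
  exact le_mul_of_one_le_left (norm_nonneg _) (by simp; positivity)

end Twist

section Cutoff

def cutoffProfile (t : ℝ) : ℝ := smoothTransition ((49 - t ^ 2) / 40)

theorem cutoffProfile_eq_one {t : ℝ} (ht : |t| ≤ 3) : cutoffProfile t = 1 :=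
  smoothTransition.one_of_one_le <| by nlinarith [sq_abs t, abs_nonneg t]

theorem cutoffProfile_eq_zero {t : ℝ} (ht : 7 ≤ |t|) : cutoffProfile t = 0 :=
  smoothTransition.zero_of_nonpos <| by nlinarith [sq_abs t]

theorem contDiff_cutoffProfile {n : ℕ∞} : ContDiff ℝ n cutoffProfile :=
  smoothTransition.contDiff.comp (by fun_prop)

theorem exists_lipschitzWith_cutoffProfile : ∃ k, LipschitzWith k cutoffProfile := by
  refine contDiff_cutoffProfile.lipschitzWith_of_hasCompactSupport ?_ one_ne_zero
  refine HasCompactSupport.intro (isCompact_closedBall 0 7) fun t ht => cutoffProfile_eq_zero ?_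
  have : 7 < |t| := by simpa using ht
  exact this.le

variable {E : Type*} [NormedAddCommGroup E]

def radialCutoff (q : E) (r : ℝ) (x : E) : ℝ := cutoffProfile (‖x - q‖ / r)

theorem contDiff_radialCutoff [InnerProductSpace ℝ E] {n : ℕ∞} (q : E) (r : ℝ) :
    ContDiff ℝ n (radialCutoff q r) := by
  have h : radialCutoff q r = fun x => smoothTransition ((49 - ‖x - q‖ ^ 2 / r ^ 2) / 40) := by
    ext x
    rw [radialCutoff, cutoffProfile, div_pow]
  have hsq : ContDiff ℝ n fun x => ‖x - q‖ ^ 2 :=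
    (contDiff_norm_sq ℝ).comp (contDiff_id.sub contDiff_const)
  rw [h]
  exact smoothTransition.contDiff.comp (by fun_prop)

theorem lipschitzWith_radialCutoff {k : ℝ≥0} (hk : LipschitzWith k cutoffProfile) (q : E)
    (r : ℝ≥0) : LipschitzWith (k / r) (radialCutoff q r) := by
  rw [div_eq_mul_inv]
  refine hk.comp (LipschitzWith.of_dist_le_mul fun x y => ?_)
  rw [Real.dist_eq, dist_eq_norm, ← sub_div, abs_div, NNReal.abs_eq, NNReal.coe_inv,
    div_eq_inv_mul]
  gcongr
  simpa using abs_norm_sub_norm_le (x - q) (y - q)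

end Cutoff

section LipschitzDiffeo

variable {E : Type*} [NormedAddCommGroup E] [NormedSpace ℝ E]

structure IsLipschitzDiffeo (K : ℝ≥0) (s : Set E) (φ ψ : E → E) : Prop where
  contDiff : ContDiff ℝ 1 φ
  contDiff_inv : ContDiff ℝ 1 ψ
  leftInverse : LeftInverse ψ φ
  rightInverse : RightInverse ψ φ
  lipschitzWith : LipschitzWith K φ
  eqOn_compl : EqOn φ id sᶜ

namespace IsLipschitzDiffeo

variable {K K₁ K₂ : ℝ≥0} {s t : Set E} {φ ψ φ₁ ψ₁ φ₂ ψ₂ : E → E}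

theorem comp (h₂ : IsLipschitzDiffeo K₂ s φ₂ ψ₂) (h₁ : IsLipschitzDiffeo K₁ s φ₁ ψ₁) :
    IsLipschitzDiffeo (K₂ * K₁) s (φ₂ ∘ φ₁) (ψ₁ ∘ ψ₂) where
  contDiff := h₂.contDiff.comp h₁.contDiff
  contDiff_inv := h₁.contDiff_inv.comp h₂.contDiff_inv
  leftInverse := h₂.leftInverse.comp h₁.leftInverse
  rightInverse := h₂.rightInverse.comp h₁.rightInverse
  lipschitzWith := h₂.lipschitzWith.comp h₁.lipschitzWith
  eqOn_compl x hx := by simp [h₁.eqOn_compl hx, h₂.eqOn_compl hx]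

theorem mono (h : IsLipschitzDiffeo K s φ ψ) (hst : s ⊆ t) : IsLipschitzDiffeo K t φ ψ :=
  { h with eqOn_compl := h.eqOn_compl.mono (compl_subset_compl.mpr hst) }

theorem closure_setOf_ne_subset (h : IsLipschitzDiffeo K s φ ψ) (hs : IsClosed s) :
    closure {x | φ x ≠ x} ⊆ s :=
  closure_minimal (fun _ hx => not_not.mp fun hxs => hx (h.eqOn_compl hxs)) hs

end IsLipschitzDiffeo

end LipschitzDiffeo

section CutoffTwist

variable {E : Type*} [NormedAddCommGroup E] [InnerProductSpace ℝ E] {v : Fin 2 → E}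
  (hv : Orthonormal ℝ v)

theorem isLipschitzDiffeo_twist_radialCutoff {k : ℝ≥0} (hk : LipschitzWith k cutoffProfile)
    (q : E) {r : ℝ≥0} (hr : 0 < r) {α : ℝ} {A : ℝ≥0} (hα : |α| ≤ A) :
    IsLipschitzDiffeo (1 + 14 * A * k) (closedBall q (7 * r))
      (twist hv q (α • radialCutoff q r)) (twist hv q (-(α • radialCutoff q r))) := by
  have hradial (x y : E) (h : ‖x - q‖ = ‖y - q‖) :
      (α • radialCutoff q r) x = (α • radialCutoff q r) y := by
    simp [radialCutoff, h]
  have hvanish (x : E) (hx : ((7 * r : ℝ≥0) : ℝ) ≤ ‖x - q‖) : (α • radialCutoff q r) x = 0 := by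
    rw [Pi.smul_apply, radialCutoff, cutoffProfile_eq_zero, smul_zero]
    rw [abs_div, abs_norm, NNReal.abs_eq, le_div_iff₀ (by exact_mod_cast hr)]
    exact_mod_cast hx
  refine ⟨contDiff_twist hv ((contDiff_radialCutoff q r).const_smul α),
    contDiff_twist hv ((contDiff_radialCutoff q r).const_smul α).neg,
    leftInverse_twist_neg hv hradial, rightInverse_twist_neg hv hradial, ?_, fun x hx => ?_⟩
  · refine (lipschitzWith_twist hv ((lipschitzWith_smul α).comp
      (lipschitzWith_radialCutoff hk q r)) hvanish).weaken ?_
    have : |α| * k ≤ A * k := by gcongr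
    rw [← NNReal.coe_le_coe]
    push_cast
    field_simp
    rw [Real.norm_eq_abs]
    linarith
  · have : 7 * (r : ℝ) < ‖x - q‖ := by simpa [dist_eq_norm] using hx
    exact twist_apply_of_eq_zero hv (hvanish x (by exact_mod_cast this.le))

theorem twist_radialCutoff_of_norm_le {q x : E} {r : ℝ≥0} (α : ℝ) (hx : ‖x - q‖ ≤ 3 * r) :
    twist hv q (α • radialCutoff q r) x = q + planeRotation hv α (x - q) := by
  refine twist_apply_of_eq hv ?_
  rw [Pi.smul_apply, radialCutoff, cutoffProfile_eq_one, smul_eq_mul, mul_one]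
  rw [abs_div, abs_norm, NNReal.abs_eq]
  exact div_le_of_le_mul₀ r.2 (by norm_num) hx

theorem twist_midpoint_twist_radialCutoff_eq_add {α : ℝ} {m m' y : E} {r : ℝ≥0}
    (hR : planeRotation hv α (m' - m) = m - m') (hmm' : dist m m' < 2 * r)
    (hy : ‖y - m‖ < 2 * r) :
    twist hv (midpoint ℝ m m') ((-α) • radialCutoff (midpoint ℝ m m') r)
      (twist hv m (α • radialCutoff m r) y) = y + (m' - m) := by
  set q := midpoint ℝ m m'
  set R := planeRotation hv α
  have hmq : m - q = R (m' - q) := by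
    rw [left_sub_midpoint, right_sub_midpoint, map_smul, hR]
  have hqm : ‖q - m‖ < r := by
    rw [← dist_eq_norm, dist_midpoint_left, Real.norm_two]
    linarith
  have hy' : ‖m + R (y - m) - q‖ ≤ 3 * r := by
    calc ‖m + R (y - m) - q‖ ≤ ‖R (y - m)‖ + ‖q - m‖ := by
          rw [show m + R (y - m) - q = R (y - m) - (q - m) by abel]
          exact norm_sub_le _ _
      _ ≤ 3 * r := by rw [LinearIsometryEquiv.norm_map]; linarith
  rw [twist_radialCutoff_of_norm_le hv α (hy.le.trans (by linarith)),
    twist_radialCutoff_of_norm_le hv (-α) hy', ← planeRotation_symm,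
    show m + R (y - m) - q = R (m' - q + (y - m)) by rw [map_add, ← hmq]; abel,
    LinearIsometryEquiv.symm_apply_apply]
  abel

end CutoffTwist

section RigidMotion

variable {E : Type*} [NormedAddCommGroup E] [InnerProductSpace ℝ E]

theorem exists_isLipschitzDiffeo_eqOn_ball (hd : 2 ≤ Module.finrank ℝ E) {k : ℝ≥0}
    (hk : LipschitzWith k cutoffProfile) {p a b a' b' : E} {r : ℝ≥0}
    (hm : dist (midpoint ℝ a b) p < r) (hm' : dist (midpoint ℝ a' b') p < r)
    (hab : dist a b = dist a' b') :
    ∃ (φ ψ : E → E) (ι : E ≃ᵢ E),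
      IsLipschitzDiffeo ((1 + 14 * NNReal.pi * k) ^ 3) (closedBall p (9 * r)) φ ψ ∧
      ι a = a' ∧ ι b = b' ∧ EqOn φ ι (ball (midpoint ℝ a b) (2 * r)) := by
  set m := midpoint ℝ a b
  set m' := midpoint ℝ a' b'
  have hr : 0 < r := by exact_mod_cast dist_nonneg.trans_lt hm
  have hmm' : dist m m' < 2 * r := by linarith [dist_triangle_right m m' p]
  have hq : dist (midpoint ℝ m m') p < 2 * r := by
    have := dist_midpoint_left (𝕜 := ℝ) m m'
    rw [Real.norm_two] at this
    linarith [dist_triangle (midpoint ℝ m m') m p]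
  have hball {c : E} (hc : dist c p < 2 * r) : closedBall c (7 * r) ⊆ closedBall p (9 * r) :=
    closedBall_subset_closedBall' (by linarith)
  have hpi {α : ℝ} (hα : |α| ≤ π) : |α| ≤ (NNReal.pi : ℝ) := by rwa [NNReal.coe_real_pi]
  obtain ⟨v₁, hv₁, α₁, hα₁, hR₁⟩ := exists_planeRotation_apply_eq hd
    (u := b - a) (u' := b' - a') (by rw [← dist_eq_norm', ← dist_eq_norm', hab])
  obtain ⟨v₂, hv₂, α₂, hα₂, hR₂⟩ := exists_planeRotation_apply_eq hd
    (u := m' - m) (u' := m - m') (norm_sub_rev _ _)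
  have h₁ := (isLipschitzDiffeo_twist_radialCutoff hv₁ hk m hr (hpi hα₁)).mono
    (hball (by linarith))
  have h₂ := (isLipschitzDiffeo_twist_radialCutoff hv₂ hk m hr (hpi hα₂)).mono
    (hball (by linarith))
  have h₃ := (isLipschitzDiffeo_twist_radialCutoff hv₂ hk (midpoint ℝ m m') hr
    (hpi (α := -α₂) (by rwa [abs_neg]))).mono (hball hq)
  refine ⟨_, _, ((IsometryEquiv.subRight m).trans (planeRotation hv₁ α₁).toIsometryEquiv).trans
    (IsometryEquiv.addLeft m'), by rw [pow_three]; exact h₃.comp (h₂.comp h₁), ?_, ?_, ?_⟩ <;>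
    simp only [EqOn, IsometryEquiv.trans_apply, IsometryEquiv.subRight_apply,
      LinearIsometryEquiv.coe_toIsometryEquiv, IsometryEquiv.addLeft_apply]
  · rw [left_sub_midpoint, ← neg_sub b a, smul_neg, map_neg, map_smul, hR₁, ← smul_neg, neg_sub,
      ← left_sub_midpoint, add_sub_cancel]
  · rw [right_sub_midpoint, map_smul, hR₁, ← right_sub_midpoint, add_sub_cancel]
  · intro x hx
    rw [mem_ball, dist_eq_norm] at hx
    have hz : ‖m + planeRotation hv₁ α₁ (x - m) - m‖ < 2 * r := by
      rwa [add_sub_cancel_left, LinearIsometryEquiv.norm_map]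
    rw [comp_apply, comp_apply, twist_radialCutoff_of_norm_le hv₁ α₁ (by linarith),
      twist_midpoint_twist_radialCutoff_eq_add hv₂ hR₂ hmm' hz]
    abel

end RigidMotion

section Cylinder

variable {d : ℕ}

theorem midpoint_mem_rigidCyl (a b : EuclideanSpace ℝ (Fin d)) {ρ : ℝ} (hρ : 0 < ρ) :
    midpoint ℝ a b ∈ rigidCyl a b ρ :=
  ⟨0, 0, by simp, by simp, by simpa using hρ, by simp⟩

theorem IsometryEquiv.image_rigidCyl_subset
    (ι : EuclideanSpace ℝ (Fin d) ≃ᵢ EuclideanSpace ℝ (Fin d)) (a b : EuclideanSpace ℝ (Fin d))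
    (ρ : ℝ) : ι '' rigidCyl a b ρ ⊆ rigidCyl (ι a) (ι b) ρ := by
  set L := ι.toRealLinearIsometryEquiv
  have hι (x) : ι x = ι 0 + L x := by simp [L]
  rintro _ ⟨_, ⟨s, w, hs, hw, hwρ, rfl⟩, rfl⟩
  have hba : ι b - ι a = L (b - a) := by rw [hι a, hι b, map_sub]; abel
  refine ⟨s, L w, hs, by rw [hba, LinearIsometryEquiv.inner_map_map, hw], by simpa using hwρ, ?_⟩
  rw [← ι.map_midpoint, hba, hι, hι (midpoint ℝ a b), map_add, map_add, map_smul]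
  abel

theorem IsometryEquiv.image_rigidCyl (ι : EuclideanSpace ℝ (Fin d) ≃ᵢ EuclideanSpace ℝ (Fin d))
    (a b : EuclideanSpace ℝ (Fin d)) (ρ : ℝ) : ι '' rigidCyl a b ρ = rigidCyl (ι a) (ι b) ρ := by
  refine (ι.image_rigidCyl_subset a b ρ).antisymm fun y hy => ⟨ι.symm y, ?_, ι.apply_symm_apply y⟩
  simpa using ι.symm.image_rigidCyl_subset (ι a) (ι b) ρ ⟨y, hy, rfl⟩

end Cylinder

end

/-- **Rigid motion of cylinders within a ball**: there is `K > 0`, depending only on the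
dimension `d ≥ 2`, such that whenever `C`, `C'` are isometric rigid solid cylinders contained
in a ball `B(p,r)`, there is a `C¹` diffeomorphism `φ` of `ℝ^d` supported in `B(p,10r)`
mapping `C` isometrically onto `C'`, with `[φ]_Lip ≤ K`. -/
theorem cylinder_isometry (d : ℕ) (hd : 2 ≤ d) :
    ∃ K : ℝ, 0 < K ∧
      ∀ (p : EuclideanSpace ℝ (Fin d)) (r : ℝ) (a b a' b' : EuclideanSpace ℝ (Fin d))
        (ρ ρ' : ℝ), a ≠ b → 0 < ρ → a' ≠ b' → 0 < ρ' →
        rigidCyl a b ρ ⊆ Metric.ball p r → rigidCyl a' b' ρ' ⊆ Metric.ball p r →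
        (∃ ι : EuclideanSpace ℝ (Fin d) ≃ᵢ EuclideanSpace ℝ (Fin d),
          ι '' rigidCyl a b ρ = rigidCyl a' b' ρ') →
        ∃ φ ψ : EuclideanSpace ℝ (Fin d) → EuclideanSpace ℝ (Fin d),
          ContDiff ℝ 1 φ ∧ ContDiff ℝ 1 ψ ∧
          Function.LeftInverse ψ φ ∧ Function.RightInverse ψ φ ∧
          closure {x | φ x ≠ x} ⊆ Metric.ball p (10 * r) ∧
          φ '' rigidCyl a b ρ = rigidCyl a' b' ρ' ∧
          (∀ x ∈ rigidCyl a b ρ, ∀ y ∈ rigidCyl a b ρ, dist (φ x) (φ y) = dist x y) ∧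
          ∀ x y, dist (φ x) (φ y) ≤ K * dist x y := by
  obtain ⟨k, hk⟩ := exists_lipschitzWith_cutoffProfile
  refine ⟨((1 + 14 * NNReal.pi * k) ^ 3 : ℝ≥0), by positivity, ?_⟩
  rintro p r a b a' b' ρ ρ' - hρ - - hC hC' ⟨ι, hι⟩
  rw [← hι, ι.image_rigidCyl] at hC' ⊢
  have hm := hC (midpoint_mem_rigidCyl a b hρ)
  have hm' := hC' (midpoint_mem_rigidCyl (ι a) (ι b) hρ)
  have hr : 0 < r := dist_nonneg.trans_lt hm
  lift r to ℝ≥0 using hr.le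
  obtain ⟨φ, ψ, ι₁, hφ, ha, hb, hφι₁⟩ :=
    exists_isLipschitzDiffeo_eqOn_ball (by simpa using hd) hk hm hm' (ι.dist_eq a b).symm
  have hCφ : EqOn φ ι₁ (rigidCyl a b ρ) :=
    hφι₁.mono (hC.trans (ball_subset_ball' (by rw [dist_comm]; linarith [mem_ball.mp hm])))
  refine ⟨φ, ψ, hφ.contDiff, hφ.contDiff_inv, hφ.leftInverse, hφ.rightInverse,
    (hφ.closure_setOf_ne_subset isClosed_closedBall).trans (closedBall_subset_ball (by linarith)),
    ?_, fun x hx y hy => by rw [hCφ hx, hCφ hy, ι₁.dist_eq], hφ.lipschitzWith.dist_le_mul⟩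
  rw [hCφ.image_eq, ι₁.image_rigidCyl, ha, hb]
end

section
/- Let Ω₀ and Ω₁ be open domains in ℝ^d, d ≥ 2, and let f : Ω₀ → Ω₁ be a bi-Lipschitz homeomorphism with bi-Lipschitz constant κ, i.e. max([f]_{Lip}, [f⁻¹]_{Lip}) ≤ κ. Then there exist constants K₀, K₁ > 0, depending only on d and κ, with the following property: for every rigid solid cylinder C₀ whose closure is contained in Ω₀ and which satisfies rad(C₀) < K₀ · len(C₀), there exists a rigid solid cylinder C₁ in ℝ^d such that f maps C₀ across C₁ and rad(C₁) ≤ K₁ · len(C₁). -/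
/-- The axial (last) coordinate of a point of `ℝ^d`. -/
noncomputable def axC {d : ℕ} (x : EuclideanSpace ℝ (Fin d)) : ℝ :=
  if h : 0 < d then x ⟨d - 1, Nat.sub_lt h Nat.one_pos⟩ else 0

/-- The radial component of a point of `ℝ^d`: the point minus its axial part. -/
noncomputable def radC {d : ℕ} (x : EuclideanSpace ℝ (Fin d)) : EuclideanSpace ℝ (Fin d) :=
  if h : 0 < d then
    x - EuclideanSpace.single ⟨d - 1, Nat.sub_lt h Nat.one_pos⟩
      (x ⟨d - 1, Nat.sub_lt h Nat.one_pos⟩)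
  else x

/-- The open standard solid cylinder `B^{d-1} × B^1 ⊆ ℝ^d`. -/
def stdCyl (d : ℕ) : Set (EuclideanSpace ℝ (Fin d)) := {x | ‖radC x‖ < 1 ∧ |axC x| < 1}

/-- The boundary ball `B^{d-1} × {σ}` of the standard solid cylinder. -/
def stdCap (d : ℕ) (σ : ℝ) : Set (EuclideanSpace ℝ (Fin d)) := {x | ‖radC x‖ < 1 ∧ axC x = σ}

/-- `ψ` is a chart for a topological solid cylinder: a homeomorphism of the closed standard
solid cylinder onto a subset of `ℝ^d` (the cylinder itself being `ψ '' stdCyl d`, with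
boundary balls `ψ '' stdCap d (±1)`). -/
def IsCylChart {d : ℕ} (ψ : EuclideanSpace ℝ (Fin d) → EuclideanSpace ℝ (Fin d)) : Prop :=
  ContinuousOn ψ (closure (stdCyl d)) ∧ Set.InjOn ψ (closure (stdCyl d))

/-- The embedding `φ` maps the topological solid cylinder with chart `ψ` across the standard
solid cylinder `B^{d-1} × B^1`: writing `C = ψ '' stdCyl d` and `C^± = ψ '' stdCap d (±1)`,
(1) `φ(C)` meets the standard cylinder; (2) `φ(C)` avoids the lateral boundary
`∂(B^{d-1}×B^1) ∖ (B^{d-1}×∂B^1)`; (3) the closures of `φ(C^±)` avoid the closed standard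
cylinder; (4) for each sign `σ = ±1` the connected component of
`φ(C) ∖ (B^{d-1}×B^1)` whose boundary contains `φ(C^σ)` has closure meeting
`B^{d-1}×{σ}` but not `B^{d-1}×{-σ}`. -/
def MapsAcrossStd {d : ℕ} (φ ψ : EuclideanSpace ℝ (Fin d) → EuclideanSpace ℝ (Fin d)) : Prop :=
  ((φ '' (ψ '' stdCyl d)) ∩ stdCyl d).Nonempty ∧
  (φ '' (ψ '' stdCyl d)) ∩ (frontier (stdCyl d) \ (stdCap d 1 ∪ stdCap d (-1))) = ∅ ∧
  closure (φ '' (ψ '' stdCap d 1)) ∩ closure (stdCyl d) = ∅ ∧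
  closure (φ '' (ψ '' stdCap d (-1))) ∩ closure (stdCyl d) = ∅ ∧
  ∀ σ : ℝ, σ = 1 ∨ σ = -1 →
    ∃ x ∈ (φ '' (ψ '' stdCyl d)) \ stdCyl d,
      φ '' (ψ '' stdCap d σ) ⊆
        frontier (connectedComponentIn ((φ '' (ψ '' stdCyl d)) \ stdCyl d) x) ∧
      (closure (connectedComponentIn ((φ '' (ψ '' stdCyl d)) \ stdCyl d) x) ∩
        stdCap d σ).Nonempty ∧
      closure (connectedComponentIn ((φ '' (ψ '' stdCyl d)) \ stdCyl d) x) ∩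
        stdCap d (-σ) = ∅

/-- The boundary ball of `C(a,b;ρ)` corresponding to the sign `σ`. -/
def rigidCap {d : ℕ} (a b : EuclideanSpace ℝ (Fin d)) (ρ σ : ℝ) :
    Set (EuclideanSpace ℝ (Fin d)) :=
  {x | ∃ v : EuclideanSpace ℝ (Fin d), (inner ℝ v (b - a) : ℝ) = 0 ∧ ‖v‖ < ρ ∧
    x = midpoint ℝ a b + (σ / 2) • (b - a) + v}

/-- `ψ` is a defining affine chart for the rigid solid cylinder `C(a,b;ρ)`. -/
def IsRigidChart {d : ℕ} (a b : EuclideanSpace ℝ (Fin d)) (ρ : ℝ)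
    (ψ : EuclideanSpace ℝ (Fin d) → EuclideanSpace ℝ (Fin d)) : Prop :=
  (∃ (L : EuclideanSpace ℝ (Fin d) ≃ₗ[ℝ] EuclideanSpace ℝ (Fin d))
      (c : EuclideanSpace ℝ (Fin d)), ∀ x, ψ x = c + L x) ∧
  ψ '' stdCyl d = rigidCyl a b ρ ∧
  ψ '' stdCap d 1 = rigidCap a b ρ 1 ∧
  ψ '' stdCap d (-1) = rigidCap a b ρ (-1)

/-- The embedding `φ` maps the topological solid cylinder with chart `ψ` across the rigid
solid cylinder `C(a,b;ρ)`: for a defining affine chart `ψ'` of `C(a,b;ρ)`, the composition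
`ψ'⁻¹ ∘ φ` maps the cylinder across the standard solid cylinder. -/
def MapsAcrossRigid {d : ℕ} (φ ψ : EuclideanSpace ℝ (Fin d) → EuclideanSpace ℝ (Fin d))
    (a b : EuclideanSpace ℝ (Fin d)) (ρ : ℝ) : Prop :=
  ∃ ψ' ψ'i : EuclideanSpace ℝ (Fin d) → EuclideanSpace ℝ (Fin d),
    IsRigidChart a b ρ ψ' ∧ Function.LeftInverse ψ'i ψ' ∧ Function.RightInverse ψ'i ψ' ∧
    MapsAcrossStd (ψ'i ∘ φ) ψ

/-- The embedding `φ` maps the rigid solid cylinder `C(a₀,b₀;ρ₀)` across the rigid solid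
cylinder `C(a₁,b₁;ρ₁)`. -/
def RigidMapsAcross {d : ℕ} (φ : EuclideanSpace ℝ (Fin d) → EuclideanSpace ℝ (Fin d))
    (a₀ b₀ : EuclideanSpace ℝ (Fin d)) (ρ₀ : ℝ)
    (a₁ b₁ : EuclideanSpace ℝ (Fin d)) (ρ₁ : ℝ) : Prop :=
  ∃ ψ₀, IsRigidChart a₀ b₀ ρ₀ ψ₀ ∧ MapsAcrossRigid φ ψ₀ a₁ b₁ ρ₁

/-!
Write `L = |a₀ - b₀|`, `A = f a₀`, `B = f b₀`; then `L / κ ≤ |A - B| ≤ κ L`, so `κ ≥ 1`. Take for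
`C₁` the cylinder of radius `4κL` whose axis is the middle half of the segment `[A, B]`, and pull
`f` back by the affine charts: `g = ψ₁⁻¹ ∘ f ∘ ψ₀` is a continuous injection of the closed standard
cylinder. Since `f(C₀)` stays within `κ(ρ₀ + L) + |A - B|/2 < 4κL` of the midpoint of `[A, B]`,
`g` lands in the infinite cylinder `B^{d-1} × ℝ`. Since `ρ₀ < L / (16κ²)`, the slab of relative
width `δ = 1/(8κ²)` at either end of `C₀` lies within `ρ₀ + δL/2` of `a₀` or `b₀`, so `f` maps it
within `|A - B|/8` of `A` or `B`, i.e. beyond the corresponding end of `C₁` (`±axC ≥ 3/2`).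

These two properties alone force `g` to map across the standard cylinder. The image of the end
slab is connected and lies outside the standard cylinder, so it sits in one component `Γ` of
`g(C) ∖ (B^{d-1}×B^1)`, and `Γ` stays beyond the same end because all points of that set have
`|axC| ≥ 1`. The image of the boundary ball is in the closure of the slab image, hence in the
frontier of `Γ`; and the last point where the image of the axis crosses the end face
`B^{d-1}×{±1}` is a limit of points of `Γ`.
-/

open scoped RealInnerProductSpace
open Set Function Filter Topology

local notation "𝔼" d:max => EuclideanSpace ℝ (Fin d)

variable {d : ℕ}

lemma mul_le_abs_of_abs_eq_one {σ : ℝ} (hσ : |σ| = 1) (a : ℝ) : σ * a ≤ |a| := by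
  simpa [abs_mul, hσ] using le_abs_self (σ * a)

lemma mul_self_eq_one_of_abs_eq_one {σ : ℝ} (hσ : |σ| = 1) : σ * σ = 1 := by
  rw [← abs_mul_abs_self, hσ, one_mul]

lemma midpoint_add_half_smul_sub {E : Type*} [AddCommGroup E] [Module ℝ E] (p q : E) :
    midpoint ℝ p q + (1 / 2 : ℝ) • (q - p) = q := by
  rw [midpoint_eq_smul_add, invOf_eq_inv]; module

lemma midpoint_add_neg_half_smul_sub {E : Type*} [AddCommGroup E] [Module ℝ E] (p q : E) :
    midpoint ℝ p q + (-1 / 2 : ℝ) • (q - p) = p := by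
  rw [midpoint_eq_smul_add, invOf_eq_inv]; module

lemma apply_midpoint_add_sign_smul_sub {E F : Type*} [AddCommGroup E] [Module ℝ E]
    [AddCommGroup F] [Module ℝ F] (f : E → F) (a b : E) {σ : ℝ} (hσ : |σ| = 1) :
    f (midpoint ℝ a b + (σ / 2) • (b - a)) = midpoint ℝ (f a) (f b) + (σ / 2) • (f b - f a) := by
  rcases (abs_eq zero_le_one).mp hσ with rfl | rfl
  · rw [midpoint_add_half_smul_sub, midpoint_add_half_smul_sub]
  · rw [midpoint_add_neg_half_smul_sub, midpoint_add_neg_half_smul_sub]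

lemma sub_ne_add_of_ne_zero {E : Type*} [AddCommGroup E] [Module ℝ E] (m : E) {v : E}
    (hv : v ≠ 0) : m - v ≠ m + v := fun h => by
  rw [sub_eq_add_neg, add_right_inj, neg_eq_iff_add_eq_zero, ← two_smul ℝ, smul_eq_zero] at h
  exact hv (h.resolve_left two_ne_zero)

lemma ne_of_dist_le_mul_dist {E F : Type*} [MetricSpace E] [MetricSpace F] {κ : ℝ} {x y : E}
    {X Y : F} (hxy : x ≠ y) (h : dist x y ≤ κ * dist X Y) : X ≠ Y := fun hXY => by
  rw [hXY, dist_self, mul_zero] at h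
  exact hxy (dist_le_zero.mp h)

lemma exists_last_eq_of_continuousOn {h : ℝ → ℝ} {a b c : ℝ} (hab : a ≤ b)
    (hh : ContinuousOn h (Icc a b)) (ha : h a ≤ c) (hb : c < h b) :
    ∃ s ∈ Ico a b, h s = c ∧ ∀ t ∈ Ioc s b, c < h t := by
  set T := Icc a b ∩ h ⁻¹' Iic c
  have hTclosed : IsClosed T := hh.preimage_isClosed_of_isClosed isClosed_Icc isClosed_Iic
  have hTbdd : BddAbove T := ⟨b, fun t ht => ht.1.2⟩
  have hsT : sSup T ∈ T := hTclosed.csSup_mem ⟨a, ⟨le_rfl, hab⟩, ha⟩ hTbdd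
  have hlast : ∀ t ∈ Icc a b, sSup T < t → c < h t := fun t ht hst =>
    lt_of_not_ge fun htc => (le_csSup hTbdd ⟨ht, htc⟩).not_gt hst
  have hsb : sSup T < b := hsT.1.2.lt_of_ne fun hs => (hs ▸ hsT.2).not_gt hb
  obtain ⟨t, ht, htc⟩ := intermediate_value_Icc hsb.le (hh.mono (Icc_subset_Icc_left hsT.1.1))
    ⟨hsT.2, hb.le⟩
  have hts : t = sSup T :=
    (le_csSup hTbdd ⟨⟨hsT.1.1.trans ht.1, ht.2⟩, htc.le⟩).antisymm ht.1
  exact ⟨sSup T, ⟨hsT.1.1, hsb⟩, hts ▸ htc,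
    fun t ht => hlast t ⟨hsT.1.1.trans ht.1.le, ht.2⟩ ht.1⟩

noncomputable def eAx (d : ℕ) : 𝔼 d :=
  if h : 0 < d then EuclideanSpace.single ⟨d - 1, Nat.sub_lt h Nat.one_pos⟩ 1 else 0

lemma axC_add (x y : 𝔼 d) : axC (x + y) = axC x + axC y := by
  unfold axC; split_ifs <;> simp

lemma axC_smul (c : ℝ) (x : 𝔼 d) : axC (c • x) = c * axC x := by
  unfold axC; split_ifs <;> simp

lemma axC_sub (x y : 𝔼 d) : axC (x - y) = axC x - axC y := by
  unfold axC; split_ifs <;> simp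

lemma radC_add (x y : 𝔼 d) : radC (x + y) = radC x + radC y := by
  unfold radC; split_ifs
  · ext j; simp only [PiLp.add_apply, PiLp.sub_apply, PiLp.single_apply]; split_ifs <;> ring
  · rfl

lemma radC_smul (c : ℝ) (x : 𝔼 d) : radC (c • x) = c • radC x := by
  unfold radC; split_ifs
  · ext j; simp only [PiLp.smul_apply, PiLp.sub_apply, PiLp.single_apply, smul_eq_mul]
    split_ifs <;> ring
  · rfl

section PositiveDimension

variable (hd : 0 < d)
include hd

lemma axC_eq_inner (x : 𝔼 d) : axC x = ⟪x, eAx d⟫ := by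
  rw [axC, eAx, dif_pos hd, dif_pos hd, EuclideanSpace.inner_single_right]
  simp

lemma radC_eq (x : 𝔼 d) : radC x = x - axC x • eAx d := by
  rw [radC, axC, eAx, dif_pos hd, dif_pos hd, dif_pos hd]
  ext j; simp only [PiLp.smul_apply, PiLp.sub_apply, PiLp.single_apply, smul_eq_mul]
  split_ifs <;> ring

lemma norm_eAx : ‖eAx d‖ = 1 := by
  rw [eAx, dif_pos hd, PiLp.norm_single, norm_one]

lemma axC_eAx : axC (eAx d) = 1 := by
  rw [axC_eq_inner hd, real_inner_self_eq_norm_sq, norm_eAx hd, one_pow]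

lemma radC_add_axC (x : 𝔼 d) : radC x + axC x • eAx d = x := by
  rw [radC_eq hd, sub_add_cancel]

lemma axC_radC (x : 𝔼 d) : axC (radC x) = 0 := by
  rw [radC_eq hd, sub_eq_add_neg, axC_add, ← neg_smul, axC_smul, axC_eAx hd]; ring

lemma radC_eAx : radC (eAx d) = 0 := by
  rw [radC_eq hd, axC_eAx hd, one_smul, sub_self]

lemma radC_radC (x : 𝔼 d) : radC (radC x) = radC x := by
  rw [radC_eq hd (radC x), axC_radC hd, zero_smul, sub_zero]

lemma continuous_axC : Continuous (axC : 𝔼 d → ℝ) := by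
  simp_rw [funext (axC_eq_inner hd)]
  fun_prop

lemma continuous_radC : Continuous (radC : 𝔼 d → 𝔼 d) := by
  simp_rw [funext (radC_eq hd)]
  have := continuous_axC hd
  fun_prop

end PositiveDimension

lemma convex_stdCyl : Convex ℝ (stdCyl d) := by
  have hrad : Convex ℝ {x : 𝔼 d | ‖radC x‖ < 1} := by
    simpa [Set.preimage, Metric.ball, dist_zero_right] using
      (convex_ball (0 : 𝔼 d) 1).linear_preimage ⟨⟨radC, radC_add⟩, radC_smul⟩
  have hax : Convex ℝ {x : 𝔼 d | |axC x| < 1} := by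
    simpa [Set.preimage, abs_lt] using
      (convex_Ioo (-1 : ℝ) 1).linear_preimage ⟨⟨axC, axC_add⟩, axC_smul⟩
  exact hrad.inter hax

section StandardCylinder

variable (hd : 0 < d)
include hd

lemma isOpen_stdCyl : IsOpen (stdCyl d) :=
  (isOpen_lt (continuous_norm.comp (continuous_radC hd)) continuous_const).inter
    (isOpen_lt (continuous_abs.comp (continuous_axC hd)) continuous_const)

lemma closure_stdCyl : closure (stdCyl d) = {x | ‖radC x‖ ≤ 1 ∧ |axC x| ≤ 1} := by
  refine Subset.antisymm (closure_minimal (fun x hx => ⟨hx.1.le, hx.2.le⟩) ?_) fun x hx => ?_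
  · exact (isClosed_le (continuous_norm.comp (continuous_radC hd)) continuous_const).inter
      (isClosed_le (continuous_abs.comp (continuous_axC hd)) continuous_const)
  have hlim : Tendsto (fun t : ℝ => t • x) (𝓝[<] 1) (𝓝 x) := by
    have hcont : Continuous fun t : ℝ => t • x := continuous_id.smul continuous_const
    simpa using (hcont.tendsto 1).mono_left nhdsWithin_le_nhds
  refine mem_closure_of_tendsto hlim ?_
  filter_upwards [Ioo_mem_nhdsLT (zero_lt_one' ℝ)] with t ht
  refine ⟨?_, ?_⟩
  · rw [radC_smul, norm_smul, Real.norm_of_nonneg ht.1.le]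
    nlinarith [hx.1, ht.1, ht.2]
  · rw [axC_smul, abs_mul, abs_of_pos ht.1]
    nlinarith [hx.2, ht.1, ht.2]

lemma stdCap_subset_closure_stdCyl {σ : ℝ} (hσ : |σ| ≤ 1) : stdCap d σ ⊆ closure (stdCyl d) := by
  rw [closure_stdCyl hd]
  exact fun x hx => ⟨hx.1.le, hx.2 ▸ hσ⟩

lemma smul_eAx_mem_stdCyl {t : ℝ} (ht : |t| < 1) : t • eAx d ∈ stdCyl d := by
  refine ⟨?_, ?_⟩
  · rw [radC_smul, radC_eAx hd, smul_zero, norm_zero]; exact one_pos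
  · rwa [axC_smul, axC_eAx hd, mul_one]

lemma smul_eAx_mem_closure_stdCyl {t : ℝ} (ht : |t| ≤ 1) : t • eAx d ∈ closure (stdCyl d) := by
  refine stdCap_subset_closure_stdCyl hd (σ := t) ht ⟨?_, ?_⟩
  · rw [radC_smul, radC_eAx hd, smul_zero, norm_zero]; exact one_pos
  · rw [axC_smul, axC_eAx hd, mul_one]

lemma abs_axC_sub_le_of_le_mul_axC {τ δ : ℝ} (hτ : |τ| = 1) {x : 𝔼 d}
    (hx : x ∈ closure (stdCyl d)) (hxτ : 1 - δ ≤ τ * axC x) : |axC x - τ| ≤ δ := by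
  have hkey : axC x - τ = τ * (τ * axC x - 1) := by
    linear_combination (-axC x) * mul_self_eq_one_of_abs_eq_one hτ
  have h1 := mul_le_abs_of_abs_eq_one hτ (axC x)
  have h2 : |axC x| ≤ 1 := ((closure_stdCyl hd).subset hx).2
  rw [hkey, abs_mul, hτ, one_mul, abs_le]
  constructor <;> linarith

end StandardCylinder

section Crossing

variable {g : 𝔼 d → 𝔼 d} {σ δ c : ℝ}

lemma isPreconnected_image_slab (hgc : ∀ x ∈ closure (stdCyl d), ContinuousAt g x) :
    IsPreconnected (g '' {x | x ∈ stdCyl d ∧ 1 - δ ≤ σ * axC x}) := by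
  have hlin : IsLinearMap ℝ fun x : 𝔼 d => σ * axC x :=
    ⟨fun x y => by rw [axC_add, mul_add], fun a x => by rw [axC_smul, smul_eq_mul]; ring⟩
  refine ((convex_stdCyl.inter (convex_halfSpace_ge hlin (1 - δ))).isPreconnected).image g ?_
  exact fun x hx => (hgc x (subset_closure hx.1)).continuousWithinAt

lemma mem_closure_image_slab_of_mem_stdCap (hd : 0 < d) (hσ : |σ| = 1) (hδ : 0 < δ) (hδ1 : δ ≤ 1)
    (hgc : ∀ x ∈ closure (stdCyl d), ContinuousAt g x) {x : 𝔼 d} (hx : x ∈ stdCap d σ) :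
    g x ∈ closure (g '' {x | x ∈ stdCyl d ∧ 1 - δ ≤ σ * axC x}) := by
  have hσσ := mul_self_eq_one_of_abs_eq_one hσ
  have hpath : Tendsto (fun s : ℝ => x - (σ * s) • eAx d) (𝓝[>] 0) (𝓝 x) := by
    have hcont : Continuous fun s : ℝ => x - (σ * s) • eAx d := by fun_prop
    simpa using (hcont.tendsto 0).mono_left nhdsWithin_le_nhds
  refine mem_closure_of_tendsto
    ((hgc x (stdCap_subset_closure_stdCyl hd hσ.le hx)).tendsto.comp hpath) ?_
  filter_upwards [Ioo_mem_nhdsGT hδ] with s hs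
  have hax : axC (x - (σ * s) • eAx d) = σ * (1 - s) := by
    rw [sub_eq_add_neg, axC_add, ← neg_smul, axC_smul, axC_eAx hd, hx.2]; ring
  have hrad : radC (x - (σ * s) • eAx d) = radC x := by
    rw [sub_eq_add_neg, radC_add, ← neg_smul, radC_smul, radC_eAx hd, smul_zero, add_zero]
  refine mem_image_of_mem g ⟨⟨hrad ▸ hx.1, ?_⟩, ?_⟩
  · rw [hax, abs_mul, hσ, one_mul, abs_of_pos (by linarith [hs.2] : 0 < 1 - s)]; linarith [hs.1]
  · rw [hax, ← mul_assoc, hσσ, one_mul]; linarith [hs.2]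

lemma continuousOn_axis_path (hd : 0 < d) (hgc : ∀ x ∈ closure (stdCyl d), ContinuousAt g x)
    (hσ : |σ| = 1) : ContinuousOn (fun t : ℝ => g ((σ * t) • eAx d)) (Icc (-1) 1) := fun t ht =>
  ((hgc _ (smul_eAx_mem_closure_stdCyl hd (by rw [abs_mul, hσ, one_mul]; exact abs_le.mpr ht))).comp
    (f := fun t : ℝ => (σ * t) • eAx d) (by fun_prop)).continuousWithinAt

lemma notMem_stdCyl_of_one_lt_mul_axC (hσ : |σ| = 1) {z : 𝔼 d} (hz : 1 < σ * axC z) :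
    z ∉ stdCyl d :=
  fun hz' => by linarith [mul_le_abs_of_abs_eq_one hσ (axC z), hz'.2]

lemma one_le_abs_axC_of_mem_image_diff (hrad : ∀ x ∈ stdCyl d, ‖radC (g x)‖ < 1) {z : 𝔼 d}
    (hz : z ∈ g '' stdCyl d \ stdCyl d) : 1 ≤ |axC z| := by
  obtain ⟨⟨x, hx, rfl⟩, hzx⟩ := hz
  exact le_of_not_gt fun h => hzx ⟨hrad x hx, h⟩

lemma connectedComponentIn_subset_one_le_mul_axC (hd : 0 < d) (hσ : |σ| = 1)
    {F : Set (𝔼 d)} (hF : ∀ z ∈ F, 1 ≤ |axC z|) {z₀ : 𝔼 d} (hz₀F : z₀ ∈ F)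
    (hz₀ : 0 < σ * axC z₀) : connectedComponentIn F z₀ ⊆ {z | 1 ≤ σ * axC z} := by
  have hcont : Continuous fun z : 𝔼 d => σ * axC z := continuous_const.mul (continuous_axC hd)
  have hsplit : ∀ z ∈ F, 1 ≤ σ * axC z ∨ σ * axC z ≤ -1 := fun z hz =>
    le_abs'.mp (by rw [abs_mul, hσ, one_mul]; exact hF z hz) |>.symm
  have hpos : connectedComponentIn F z₀ ⊆ {z | 0 < σ * axC z} := by
    refine isPreconnected_connectedComponentIn.subset_left_of_subset_union
      (v := {z | σ * axC z < 0}) (isOpen_lt continuous_const hcont)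
      (isOpen_lt hcont continuous_const) ?_ ?_
      ⟨z₀, mem_connectedComponentIn hz₀F, hz₀⟩
    · exact disjoint_left.mpr fun z h1 h2 => lt_asymm (α := ℝ) h1 h2
    · intro z hz
      rcases hsplit z (connectedComponentIn_subset F z₀ hz) with h | h
      exacts [Or.inl (show 0 < σ * axC z by linarith), Or.inr (show σ * axC z < 0 by linarith)]
  intro z hz
  have := hpos hz
  rcases hsplit z (connectedComponentIn_subset F z₀ hz) with h | h
  exacts [h, by simp only [mem_ofPred_eq] at this; linarith]

end Crossing

structure CrossesStdCyl (g : 𝔼 d → 𝔼 d) (δ c : ℝ) : Prop where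
  pos : 0 < δ
  le_one : δ ≤ 1
  one_lt : 1 < c
  continuousAt : ∀ x ∈ closure (stdCyl d), ContinuousAt g x
  injOn : InjOn g (closure (stdCyl d))
  norm_radC_lt : ∀ x ∈ closure (stdCyl d), ‖radC (g x)‖ < 1
  le_mul_axC : ∀ τ : ℝ, |τ| = 1 → ∀ x ∈ closure (stdCyl d), 1 - δ ≤ τ * axC x → c ≤ τ * axC (g x)

namespace CrossesStdCyl

variable (hd : 0 < d) {g : 𝔼 d → 𝔼 d} {δ c : ℝ} (hg : CrossesStdCyl g δ c)
include hd hg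

lemma mem_stdCyl_of_mem_Icc {σ t : ℝ} (hσ : |σ| = 1) (ht : t ∈ Icc (-(1 - δ)) (1 - δ)) :
    (σ * t) • eAx d ∈ stdCyl d :=
  smul_eAx_mem_stdCyl hd (by
    rw [abs_mul, hσ, one_mul, abs_lt]; constructor <;> linarith [ht.1, ht.2, hg.pos])

lemma le_mul_axC_axis {σ : ℝ} (hσ : |σ| = 1) :
    c ≤ σ * axC (g ((σ * (1 - δ)) • eAx d)) ∧ σ * axC (g ((σ * -(1 - δ)) • eAx d)) ≤ -c := by
  have hσσ := mul_self_eq_one_of_abs_eq_one hσ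
  have hax : ∀ t, axC ((σ * t) • eAx d) = σ * t := fun t => by rw [axC_smul, axC_eAx hd, mul_one]
  have hmem := fun t (ht : t ∈ Icc (-(1 - δ)) (1 - δ)) => hg.mem_stdCyl_of_mem_Icc hd hσ ht
  have hδ := hg.le_one
  refine ⟨hg.le_mul_axC σ hσ _ (subset_closure (hmem _ ⟨by linarith [hg.pos], le_rfl⟩)) ?_, ?_⟩
  · rw [hax]; exact le_of_eq (by linear_combination (-(1 - δ)) * hσσ)
  · have := hg.le_mul_axC (-σ) (by rwa [abs_neg]) _
      (subset_closure (hmem _ ⟨le_rfl, by linarith [hg.pos]⟩))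
      (by rw [hax]; exact le_of_eq (by linear_combination (-(1 - δ)) * hσσ))
    linarith

lemma exists_isPreconnected_subset_image_diff {σ : ℝ} (hσ : |σ| = 1) :
    ∃ P ⊆ g '' stdCyl d \ stdCyl d, IsPreconnected P ∧ g ((σ * (1 - δ)) • eAx d) ∈ P ∧
      (closure P ∩ stdCap d σ).Nonempty := by
  have hends := hg.le_mul_axC_axis hd hσ
  set p : ℝ → 𝔼 d := fun t => g ((σ * t) • eAx d)
  have hσσ := mul_self_eq_one_of_abs_eq_one hσ
  have hmem := fun t (ht : t ∈ Icc (-(1 - δ)) (1 - δ)) => hg.mem_stdCyl_of_mem_Icc hd hσ ht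
  have hδ := hg.pos
  have hp : ContinuousOn p (Icc (-(1 - δ)) (1 - δ)) :=
    (continuousOn_axis_path hd hg.continuousAt hσ).mono
      (Icc_subset_Icc (by linarith) (by linarith [hg.le_one]))
  have hh : ContinuousOn (fun t => σ * axC (p t)) (Icc (-(1 - δ)) (1 - δ)) :=
    (continuous_const.mul (continuous_axC hd)).comp_continuousOn hp
  -- beyond its last crossing of the level `σ * axC = 1` the image of the axis stays outside the
  -- standard cylinder, and the crossing point itself lies on the face `stdCap d σ`
  obtain ⟨s, hs, hs1, hlast⟩ := exists_last_eq_of_continuousOn (c := 1) (by linarith [hg.le_one]) hh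
    (by linarith [hends.2, hg.one_lt]) (by linarith [hends.1, hg.one_lt])
  have hsub : Ioc s (1 - δ) ⊆ Icc (-(1 - δ)) (1 - δ) :=
    Ioc_subset_Icc_self.trans (Icc_subset_Icc_left hs.1)
  refine ⟨p '' Ioc s (1 - δ), ?_, isPreconnected_Ioc.image p (hp.mono hsub),
    ⟨1 - δ, ⟨hs.2, le_rfl⟩, rfl⟩, p s, ?_,
    hg.norm_radC_lt _ (subset_closure (hmem s (Ico_subset_Icc_self hs))), ?_⟩
  · rintro _ ⟨t, ht, rfl⟩
    exact ⟨mem_image_of_mem g (hmem t (hsub ht)), notMem_stdCyl_of_one_lt_mul_axC hσ (hlast t ht)⟩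
  · refine ((hp s (Ico_subset_Icc_self hs)).mono hsub).mem_closure_image ?_
    rw [closure_Ioc hs.2.ne]
    exact left_mem_Icc.mpr hs.2.le
  · linear_combination σ * hs1 - axC (p s) * hσσ

lemma exists_connectedComponentIn {σ : ℝ} (hσ : |σ| = 1) :
    ∃ x ∈ (g '' stdCyl d) \ stdCyl d,
      g '' stdCap d σ ⊆ frontier (connectedComponentIn ((g '' stdCyl d) \ stdCyl d) x) ∧
      (closure (connectedComponentIn ((g '' stdCyl d) \ stdCyl d) x) ∩ stdCap d σ).Nonempty ∧
      closure (connectedComponentIn ((g '' stdCyl d) \ stdCyl d) x) ∩ stdCap d (-σ) = ∅ := by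
  set F := g '' stdCyl d \ stdCyl d
  set N := {x | x ∈ stdCyl d ∧ 1 - δ ≤ σ * axC x}
  set x₀ := (σ * (1 - δ)) • eAx d
  have hx₀ : x₀ ∈ N := by
    refine ⟨hg.mem_stdCyl_of_mem_Icc hd hσ ⟨by linarith [hg.pos, hg.le_one], le_rfl⟩, ?_⟩
    rw [axC_smul, axC_eAx hd, mul_one, ← mul_assoc, mul_self_eq_one_of_abs_eq_one hσ, one_mul]
  have hNF : g '' N ⊆ F := by
    rintro _ ⟨x, hx, rfl⟩
    exact ⟨mem_image_of_mem g hx.1, notMem_stdCyl_of_one_lt_mul_axC hσ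
      (hg.one_lt.trans_le (hg.le_mul_axC σ hσ x (subset_closure hx.1) hx.2))⟩
  set Γ := connectedComponentIn F (g x₀)
  have hx₀F : g x₀ ∈ F := hNF (mem_image_of_mem g hx₀)
  have hNΓ : g '' N ⊆ Γ := (isPreconnected_image_slab hg.continuousAt).subset_connectedComponentIn
    (mem_image_of_mem g hx₀) hNF
  have hΓ : closure Γ ⊆ {z | 1 ≤ σ * axC z} := by
    refine closure_minimal (connectedComponentIn_subset_one_le_mul_axC hd hσ
      (fun z hz => one_le_abs_axC_of_mem_image_diff
        (fun x hx => hg.norm_radC_lt x (subset_closure hx)) hz) hx₀F ?_)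
      (isClosed_le continuous_const (continuous_const.mul (continuous_axC hd)))
    linarith [hg.one_lt, hg.le_mul_axC σ hσ x₀ (subset_closure hx₀.1) hx₀.2]
  refine ⟨g x₀, hx₀F, ?_, ?_, ?_⟩
  · rintro _ ⟨x, hx, rfl⟩
    rw [← closure_sdiff_interior]
    refine ⟨closure_mono hNΓ (mem_closure_image_slab_of_mem_stdCap hd hσ hg.pos hg.le_one
      hg.continuousAt hx), fun hint => ?_⟩
    obtain ⟨⟨y, hy, hyx⟩, -⟩ := connectedComponentIn_subset F _ (interior_subset hint)
    have hxy := hg.injOn (subset_closure hy) (stdCap_subset_closure_stdCyl hd hσ.le hx) hyx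
    exact (hxy ▸ hy).2.ne (by rw [hx.2, hσ])
  · obtain ⟨P, hPF, hP, hx₀P, hPcap⟩ := hg.exists_isPreconnected_subset_image_diff hd hσ
    exact hPcap.mono (inter_subset_inter_left _
      (closure_mono (hP.subset_connectedComponentIn hx₀P hPF)))
  · refine eq_empty_iff_forall_notMem.mpr fun z ⟨hzΓ, hzcap⟩ => ?_
    have := hΓ hzΓ
    simp only [mem_ofPred_eq, hzcap.2] at this
    linarith [mul_self_eq_one_of_abs_eq_one hσ]

lemma image_inter_stdCyl_nonempty : (g '' stdCyl d ∩ stdCyl d).Nonempty := by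
  have hmem := fun t (ht : t ∈ Icc (-(1 - δ)) (1 - δ)) => hg.mem_stdCyl_of_mem_Icc hd abs_one ht
  have hδ := hg.pos
  have hp : ContinuousOn (fun t : ℝ => axC (g ((1 * t) • eAx d))) (Icc (-(1 - δ)) (1 - δ)) :=
    (continuous_axC hd).comp_continuousOn ((continuousOn_axis_path hd hg.continuousAt abs_one).mono
      (Icc_subset_Icc (by linarith) (by linarith [hg.le_one])))
  have hends := hg.le_mul_axC_axis hd abs_one
  obtain ⟨t, ht, ht0⟩ := intermediate_value_Icc (by linarith [hg.le_one]) hp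
    (show (0 : ℝ) ∈ Icc _ _ from ⟨by linarith [hg.one_lt], by linarith [hg.one_lt]⟩)
  refine ⟨_, mem_image_of_mem _ (hmem t ht), hg.norm_radC_lt _ (subset_closure (hmem t ht)), ?_⟩
  simp only at ht0
  rw [ht0, abs_zero]; exact one_pos

lemma image_inter_lateral_eq_empty :
    g '' stdCyl d ∩ (frontier (stdCyl d) \ (stdCap d 1 ∪ stdCap d (-1))) = ∅ := by
  refine eq_empty_iff_forall_notMem.mpr ?_
  rintro _ ⟨⟨x, hx, rfl⟩, hfr, hcaps⟩
  rw [(isOpen_stdCyl hd).frontier_eq, closure_stdCyl hd] at hfr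
  have hr := hg.norm_radC_lt x (subset_closure hx)
  have hax : |axC (g x)| = 1 := hfr.1.2.eq_of_not_lt fun h => hfr.2 ⟨hr, h⟩
  rcases abs_eq zero_le_one |>.mp hax with h | h
  exacts [hcaps (Or.inl ⟨hr, h⟩), hcaps (Or.inr ⟨hr, h⟩)]

lemma closure_image_stdCap_inter_closure_stdCyl {τ : ℝ} (hτ : |τ| = 1) :
    closure (g '' stdCap d τ) ∩ closure (stdCyl d) = ∅ := by
  have hclosed : IsClosed {z : 𝔼 d | c ≤ τ * axC z} :=
    isClosed_le continuous_const (continuous_const.mul (continuous_axC hd))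
  have hsub : closure (g '' stdCap d τ) ⊆ {z | c ≤ τ * axC z} := by
    refine closure_minimal ?_ hclosed
    rintro _ ⟨x, hx, rfl⟩
    exact hg.le_mul_axC τ hτ x (stdCap_subset_closure_stdCyl hd hτ.le hx)
      (by rw [hx.2, ← abs_mul_abs_self, hτ]; linarith [hg.pos])
  refine eq_empty_iff_forall_notMem.mpr fun z ⟨hz, hzcyl⟩ => ?_
  have hz' : c ≤ τ * axC z := hsub hz
  have hzcyl' : |axC z| ≤ 1 := ((closure_stdCyl hd).subset hzcyl).2
  linarith [mul_le_abs_of_abs_eq_one hτ (axC z), hg.one_lt]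

end CrossesStdCyl

lemma CrossesStdCyl.mapsAcrossStd (hd : 0 < d) {φ ψ : 𝔼 d → 𝔼 d} {δ c : ℝ}
    (hg : CrossesStdCyl (φ ∘ ψ) δ c) : MapsAcrossStd φ ψ := by
  simp only [MapsAcrossStd, ← image_comp]
  exact ⟨hg.image_inter_stdCyl_nonempty hd, hg.image_inter_lateral_eq_empty hd,
    hg.closure_image_stdCap_inter_closure_stdCyl hd abs_one,
    hg.closure_image_stdCap_inter_closure_stdCyl hd (by norm_num),
    fun σ hσ => hg.exists_connectedComponentIn hd (by rcases hσ with rfl | rfl <;> norm_num)⟩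

noncomputable def axisDir (a b : 𝔼 d) : 𝔼 d := ‖b - a‖⁻¹ • (b - a)

lemma norm_axisDir {a b : 𝔼 d} (hab : a ≠ b) : ‖axisDir a b‖ = 1 := by
  rw [axisDir, norm_smul, norm_inv, norm_norm,
    inv_mul_cancel₀ (norm_sub_pos_iff.mpr hab.symm).ne']

lemma sub_eq_norm_smul_axisDir {a b : 𝔼 d} (hab : a ≠ b) : b - a = ‖b - a‖ • axisDir a b := by
  rw [axisDir, smul_smul, mul_inv_cancel₀ ((norm_sub_pos_iff.mpr hab.symm).ne'), one_smul]

lemma axisDir_eq_of_sub_eq_smul {a b a' b' : 𝔼 d} {c : ℝ} (hc : 0 < c)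
    (h : b' - a' = c • (b - a)) : axisDir a' b' = axisDir a b := by
  rw [axisDir, axisDir, h, norm_smul, Real.norm_of_nonneg hc.le, smul_smul, mul_inv]
  congr 1
  field_simp

noncomputable def axisReflection (u : 𝔼 d) : 𝔼 d ≃ₗᵢ[ℝ] 𝔼 d :=
  Submodule.reflection (ℝ ∙ (eAx d - u))ᗮ

lemma axisReflection_axisReflection (u w : 𝔼 d) : axisReflection u (axisReflection u w) = w :=
  Submodule.reflection_reflection _ w

section AxisReflection

variable (hd : 0 < d) {u : 𝔼 d} (hu : ‖u‖ = 1)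
include hd hu

lemma axisReflection_eAx : axisReflection u (eAx d) = u :=
  Submodule.reflection_sub (by rw [norm_eAx hd, hu])

lemma axisReflection_self : axisReflection u u = eAx d := by
  simpa only [axisReflection_eAx hd hu] using axisReflection_axisReflection u (eAx d)

lemma axC_axisReflection (w : 𝔼 d) : axC (axisReflection u w) = ⟪w, u⟫ := by
  rw [axC_eq_inner hd, ← axisReflection_self hd hu, LinearIsometryEquiv.inner_map_map]

end AxisReflection

noncomputable def stretch (ρ ℓ : ℝ) : 𝔼 d →ₗ[ℝ] 𝔼 d where
  toFun x := ρ • radC x + (ℓ * axC x) • eAx d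
  map_add' x y := by rw [radC_add, axC_add, smul_add, mul_add, add_smul]; abel
  map_smul' c x := by
    simp only [radC_smul, axC_smul, RingHom.id_apply, smul_add, smul_smul]; ring_nf

section Stretch

variable (hd : 0 < d)
include hd

lemma axC_stretch (ρ ℓ : ℝ) (x : 𝔼 d) : axC (stretch ρ ℓ x) = ℓ * axC x := by
  rw [stretch, LinearMap.coe_mk, AddHom.coe_mk, axC_add, axC_smul, axC_radC hd, axC_smul,
    axC_eAx hd]; ring

lemma radC_stretch (ρ ℓ : ℝ) (x : 𝔼 d) : radC (stretch ρ ℓ x) = ρ • radC x := by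
  rw [stretch, LinearMap.coe_mk, AddHom.coe_mk, radC_add, radC_smul, radC_radC hd, radC_smul,
    radC_eAx hd, smul_zero, add_zero]

lemma stretch_stretch (ρ ℓ ρ' ℓ' : ℝ) (x : 𝔼 d) :
    stretch ρ ℓ (stretch ρ' ℓ' x) = stretch (ρ * ρ') (ℓ * ℓ') x := by
  conv_lhs => rw [stretch, LinearMap.coe_mk, AddHom.coe_mk, radC_stretch hd, axC_stretch hd]
  rw [stretch, LinearMap.coe_mk, AddHom.coe_mk, smul_smul, mul_assoc]

lemma stretch_one_one (x : 𝔼 d) : stretch 1 1 x = x := by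
  rw [stretch, LinearMap.coe_mk, AddHom.coe_mk, one_smul, one_mul, radC_add_axC hd]

lemma stretch_inv_stretch {ρ ℓ : ℝ} (hρ : ρ ≠ 0) (hℓ : ℓ ≠ 0) (x : 𝔼 d) :
    stretch ρ⁻¹ ℓ⁻¹ (stretch ρ ℓ x) = x := by
  rw [stretch_stretch hd, inv_mul_cancel₀ hρ, inv_mul_cancel₀ hℓ, stretch_one_one hd]

lemma stretch_stretch_inv {ρ ℓ : ℝ} (hρ : ρ ≠ 0) (hℓ : ℓ ≠ 0) (x : 𝔼 d) :
    stretch ρ ℓ (stretch ρ⁻¹ ℓ⁻¹ x) = x := by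
  rw [stretch_stretch hd, mul_inv_cancel₀ hρ, mul_inv_cancel₀ hℓ, stretch_one_one hd]

lemma norm_stretch_le {ρ ℓ : ℝ} (hρ : 0 ≤ ρ) (hℓ : 0 ≤ ℓ) (x : 𝔼 d) :
    ‖stretch ρ ℓ x‖ ≤ ρ * ‖radC x‖ + ℓ * |axC x| := by
  refine (norm_add_le _ _).trans_eq ?_
  rw [norm_smul, norm_smul, norm_eAx hd, Real.norm_of_nonneg hρ, Real.norm_eq_abs, abs_mul,
    abs_of_nonneg hℓ, mul_one]

end Stretch

noncomputable def rigidChart (a b : 𝔼 d) (ρ : ℝ) (x : 𝔼 d) : 𝔼 d :=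
  midpoint ℝ a b + axisReflection (axisDir a b) (stretch ρ (‖b - a‖ / 2) x)

noncomputable def rigidChartInv (a b : 𝔼 d) (ρ : ℝ) (y : 𝔼 d) : 𝔼 d :=
  stretch ρ⁻¹ (‖b - a‖ / 2)⁻¹ (axisReflection (axisDir a b) (y - midpoint ℝ a b))

lemma continuous_rigidChart (a b : 𝔼 d) (ρ : ℝ) : Continuous (rigidChart a b ρ) :=
  continuous_const.add ((axisReflection _).continuous.comp
    (stretch ρ (‖b - a‖ / 2)).continuous_of_finiteDimensional)

lemma continuous_rigidChartInv (a b : 𝔼 d) (ρ : ℝ) : Continuous (rigidChartInv a b ρ) :=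
  (stretch ρ⁻¹ (‖b - a‖ / 2)⁻¹).continuous_of_finiteDimensional.comp
    ((axisReflection _).continuous.comp (continuous_id.sub continuous_const))

lemma half_norm_sub_ne_zero {a b : 𝔼 d} (hab : a ≠ b) : ‖b - a‖ / 2 ≠ 0 :=
  div_ne_zero ((norm_sub_pos_iff.mpr hab.symm).ne') two_ne_zero

section RigidChart

variable (hd : 0 < d) {a b : 𝔼 d} {ρ : ℝ}
include hd

lemma norm_rigidChart_sub_le (hρ : 0 ≤ ρ) (x y : 𝔼 d) :
    ‖rigidChart a b ρ x - rigidChart a b ρ y‖ ≤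
      ρ * ‖radC (x - y)‖ + ‖b - a‖ / 2 * |axC x - axC y| := by
  rw [rigidChart, rigidChart, add_sub_add_left_eq_sub, ← map_sub, ← map_sub,
    LinearIsometryEquiv.norm_map, ← axC_sub]
  exact norm_stretch_le hd hρ (by positivity) _

variable (hab : a ≠ b)
include hab

lemma leftInverse_rigidChartInv (hρ : ρ ≠ 0) :
    LeftInverse (rigidChartInv a b ρ) (rigidChart a b ρ) := fun x => by
  rw [rigidChartInv, rigidChart, add_sub_cancel_left, axisReflection_axisReflection,
    stretch_inv_stretch hd hρ (half_norm_sub_ne_zero hab)]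

lemma rightInverse_rigidChartInv (hρ : ρ ≠ 0) :
    RightInverse (rigidChartInv a b ρ) (rigidChart a b ρ) := fun y => by
  rw [rigidChartInv, rigidChart, stretch_stretch_inv hd hρ (half_norm_sub_ne_zero hab),
    axisReflection_axisReflection, add_sub_cancel]

lemma rigidChart_smul_eAx (t : ℝ) :
    rigidChart a b ρ (t • eAx d) = midpoint ℝ a b + (t / 2) • (b - a) := by
  rw [rigidChart, stretch, LinearMap.coe_mk, AddHom.coe_mk, radC_smul, radC_eAx hd, smul_zero,
    smul_zero, zero_add, axC_smul, axC_eAx hd, mul_one, map_smul,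
    axisReflection_eAx hd (norm_axisDir hab), axisDir, smul_smul]
  congr 2
  field_simp [(norm_sub_pos_iff.mpr hab.symm).ne']

lemma axC_rigidChartInv (y : 𝔼 d) :
    axC (rigidChartInv a b ρ y) = ⟪y - midpoint ℝ a b, axisDir a b⟫ / (‖b - a‖ / 2) := by
  rw [rigidChartInv, axC_stretch hd, axC_axisReflection hd (norm_axisDir hab), inv_mul_eq_div]

lemma norm_radC_rigidChartInv (hρ : 0 < ρ) (y : 𝔼 d) :
    ‖radC (rigidChartInv a b ρ y)‖ =
      ‖(y - midpoint ℝ a b) - ⟪y - midpoint ℝ a b, axisDir a b⟫ • axisDir a b‖ / ρ := by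
  have hu := norm_axisDir hab
  rw [rigidChartInv, radC_stretch hd, radC_eq hd, axC_axisReflection hd hu,
    ← axisReflection_self hd hu, ← map_smul, ← map_sub, norm_smul, LinearIsometryEquiv.norm_map,
    norm_inv, Real.norm_of_nonneg hρ.le, inv_mul_eq_div]

end RigidChart

lemma exists_axial_decomposition_iff {a b : 𝔼 d} (hab : a ≠ b) (P : ℝ → Prop) (ρ : ℝ) (y : 𝔼 d) :
    (∃ (s : ℝ) (v : 𝔼 d), P s ∧ ⟪v, b - a⟫ = 0 ∧ ‖v‖ < ρ ∧
        y = midpoint ℝ a b + (s / 2) • (b - a) + v) ↔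
      P (⟪y - midpoint ℝ a b, axisDir a b⟫ / (‖b - a‖ / 2)) ∧
        ‖(y - midpoint ℝ a b) - ⟪y - midpoint ℝ a b, axisDir a b⟫ • axisDir a b‖ < ρ := by
  have hn : ‖b - a‖ ≠ 0 := (norm_sub_pos_iff.mpr hab.symm).ne'
  have hba := sub_eq_norm_smul_axisDir hab
  set u := axisDir a b
  set L := ‖b - a‖
  have huu : ⟪u, u⟫ = 1 := by rw [real_inner_self_eq_norm_sq, norm_axisDir hab, one_pow]
  have hperp : ∀ v : 𝔼 d, ⟪v, b - a⟫ = 0 ↔ ⟪v, u⟫ = 0 := fun v => by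
    rw [hba, real_inner_smul_right, mul_eq_zero, or_iff_right hn]
  constructor
  · rintro ⟨s, v, hs, hv, hvρ, rfl⟩
    have hw : midpoint ℝ a b + (s / 2) • (b - a) + v - midpoint ℝ a b =
        (s * (L / 2)) • u + v := by
      rw [add_assoc, add_sub_cancel_left, hba, smul_smul]; ring_nf
    have hwu : ⟪(s * (L / 2)) • u + v, u⟫ = s * (L / 2) := by
      rw [inner_add_left, real_inner_smul_left, huu, (hperp v).mp hv, mul_one, add_zero]
    rw [hw, hwu, mul_div_cancel_right₀ _ (half_norm_sub_ne_zero hab), add_sub_cancel_left]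
    exact ⟨hs, hvρ⟩
  · rintro ⟨hP, hρ⟩
    refine ⟨_, _, hP, ?_, hρ, ?_⟩
    · rw [hperp, inner_sub_left, real_inner_smul_left, huu, mul_one, sub_self]
    · have hax : (⟪y - midpoint ℝ a b, u⟫ / (L / 2) / 2) • (b - a) =
          ⟪y - midpoint ℝ a b, u⟫ • u := by
        rw [hba, smul_smul]; congr 1; field_simp
      rw [hax]; abel

lemma isRigidChart_rigidChart (hd : 0 < d) {a b : 𝔼 d} (hab : a ≠ b) {ρ : ℝ} (hρ : 0 < ρ) :
    IsRigidChart a b ρ (rigidChart a b ρ) := by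
  have hℓ := half_norm_sub_ne_zero hab
  have himage : ∀ P : ℝ → Prop, rigidChart a b ρ '' {x | ‖radC x‖ < 1 ∧ P (axC x)} =
      {y | ∃ (s : ℝ) (v : 𝔼 d), P s ∧ ⟪v, b - a⟫ = 0 ∧ ‖v‖ < ρ ∧
        y = midpoint ℝ a b + (s / 2) • (b - a) + v} := fun P => by
    rw [image_eq_preimage_of_inverse (leftInverse_rigidChartInv hd hab hρ.ne')
      (rightInverse_rigidChartInv hd hab hρ.ne')]
    ext y
    rw [mem_preimage, mem_ofPred_eq, mem_ofPred_eq, exists_axial_decomposition_iff hab,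
      norm_radC_rigidChartInv hd hab hρ, axC_rigidChartInv hd hab, div_lt_one hρ, and_comm]
  have hS : (stretch ρ (‖b - a‖ / 2)).comp (stretch ρ⁻¹ (‖b - a‖ / 2)⁻¹) = .id :=
    LinearMap.ext fun x => stretch_stretch_inv hd hρ.ne' hℓ x
  have hS' : (stretch ρ⁻¹ (‖b - a‖ / 2)⁻¹).comp (stretch ρ (‖b - a‖ / 2)) = .id :=
    LinearMap.ext fun x => stretch_inv_stretch hd hρ.ne' hℓ x
  refine ⟨⟨(LinearEquiv.ofLinearMap (re₁₂ := .ids) (re₂₁ := .ids) _ _ hS hS').trans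
    (axisReflection (axisDir a b)).toLinearEquiv, midpoint ℝ a b, fun x => rfl⟩, ?_, ?_, ?_⟩
  · exact himage (fun s => |s| < 1)
  · have h := himage (· = 1)
    simp only [exists_and_left, exists_eq_left] at h
    exact h
  · have h := himage (· = -1)
    simp only [exists_and_left, exists_eq_left] at h
    exact h

lemma rigidChart_mem_closure_rigidCyl (hd : 0 < d) {a b : 𝔼 d} (hab : a ≠ b) {ρ : ℝ} (hρ : 0 < ρ)
    {x : 𝔼 d} (hx : x ∈ closure (stdCyl d)) : rigidChart a b ρ x ∈ closure (rigidCyl a b ρ) :=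
  (isRigidChart_rigidChart hd hab hρ).2.1 ▸
    image_closure_subset_closure_image (continuous_rigidChart a b ρ) (mem_image_of_mem _ hx)

lemma left_mem_closure_rigidCyl (hd : 0 < d) {a b : 𝔼 d} (hab : a ≠ b) {ρ : ℝ} (hρ : 0 < ρ) :
    a ∈ closure (rigidCyl a b ρ) := by
  simpa only [rigidChart_smul_eAx hd hab, midpoint_add_neg_half_smul_sub] using
    rigidChart_mem_closure_rigidCyl hd hab hρ
      (smul_eAx_mem_closure_stdCyl hd (t := -1) (by norm_num))

lemma right_mem_closure_rigidCyl (hd : 0 < d) {a b : 𝔼 d} (hab : a ≠ b) {ρ : ℝ} (hρ : 0 < ρ) :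
    b ∈ closure (rigidCyl a b ρ) := by
  simpa only [rigidChart_smul_eAx hd hab, one_div, ← one_div, midpoint_add_half_smul_sub] using
    rigidChart_mem_closure_rigidCyl hd hab hρ
      (smul_eAx_mem_closure_stdCyl hd (t := 1) (by norm_num))

lemma rigidMapsAcross_of_mapsAcrossStd (hd : 0 < d) {f : 𝔼 d → 𝔼 d} {a₀ b₀ a₁ b₁ : 𝔼 d}
    {ρ₀ ρ₁ : ℝ} (hab₀ : a₀ ≠ b₀) (hρ₀ : 0 < ρ₀) (hab₁ : a₁ ≠ b₁) (hρ₁ : 0 < ρ₁)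
    (h : MapsAcrossStd (rigidChartInv a₁ b₁ ρ₁ ∘ f) (rigidChart a₀ b₀ ρ₀)) :
    RigidMapsAcross f a₀ b₀ ρ₀ a₁ b₁ ρ₁ :=
  ⟨_, isRigidChart_rigidChart hd hab₀ hρ₀, _, _, isRigidChart_rigidChart hd hab₁ hρ₁,
    leftInverse_rigidChartInv hd hab₁ hρ₁.ne', rightInverse_rigidChartInv hd hab₁ hρ₁.ne', h⟩

lemma norm_rigidChart_sub_rigidChart_smul_eAx_le (hd : 0 < d) {a b : 𝔼 d} {ρ : ℝ} (hρ : 0 ≤ ρ)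
    {x : 𝔼 d} (hx : x ∈ closure (stdCyl d)) (t : ℝ) :
    ‖rigidChart a b ρ x - rigidChart a b ρ (t • eAx d)‖ ≤ ρ + ‖b - a‖ / 2 * |axC x - t| := by
  rw [closure_stdCyl hd] at hx
  have hrad : radC (x - t • eAx d) = radC x := by
    rw [sub_eq_add_neg, radC_add, ← neg_smul, radC_smul, radC_eAx hd, smul_zero, add_zero]
  refine (norm_rigidChart_sub_le hd hρ x _).trans ?_
  rw [hrad, axC_smul, axC_eAx hd, mul_one]
  nlinarith [hx.1]

lemma norm_radC_rigidChartInv_le (hd : 0 < d) {a b : 𝔼 d} (hab : a ≠ b) {ρ : ℝ} (hρ : 0 < ρ)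
    (y : 𝔼 d) : ‖radC (rigidChartInv a b ρ y)‖ ≤ ‖y - midpoint ℝ a b‖ / ρ := by
  rw [norm_radC_rigidChartInv hd hab hρ]
  gcongr
  set w := y - midpoint ℝ a b
  have hu := norm_axisDir hab
  have h : ‖w - ⟪w, axisDir a b⟫ • axisDir a b‖ ^ 2 = ‖w‖ ^ 2 - ⟪w, axisDir a b⟫ ^ 2 := by
    rw [norm_sub_sq_real, real_inner_smul_right, norm_smul, Real.norm_eq_abs, hu, mul_one,
      sq_abs]
    ring
  exact (pow_le_pow_iff_left₀ (norm_nonneg _) (norm_nonneg _) two_ne_zero).mp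
    (by rw [h]; nlinarith [sq_nonneg ⟪w, axisDir a b⟫])

lemma dist_midpoint_sub_smul_add_smul (A B : 𝔼 d) :
    dist (midpoint ℝ A B - (1 / 4 : ℝ) • (B - A)) (midpoint ℝ A B + (1 / 4 : ℝ) • (B - A)) =
      dist A B / 2 := by
  rw [dist_eq_norm, dist_eq_norm, show midpoint ℝ A B - (1 / 4 : ℝ) • (B - A) -
    (midpoint ℝ A B + (1 / 4 : ℝ) • (B - A)) = (1 / 2 : ℝ) • (A - B) by module, norm_smul,
    Real.norm_of_nonneg (by norm_num)]
  ring

lemma three_halves_le_mul_axC_rigidChartInv (hd : 0 < d) {A B : 𝔼 d} (hAB : A ≠ B) (ρ : ℝ)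
    {σ : ℝ} (hσ : |σ| = 1) {y : 𝔼 d}
    (hy : ‖y - (midpoint ℝ A B + (σ / 2) • (B - A))‖ ≤ ‖B - A‖ / 8) :
    3 / 2 ≤ σ * axC (rigidChartInv (midpoint ℝ A B - (1 / 4 : ℝ) • (B - A))
      (midpoint ℝ A B + (1 / 4 : ℝ) • (B - A)) ρ y) := by
  set M := midpoint ℝ A B
  set P := M + (σ / 2) • (B - A)
  set u := axisDir A B with hu
  have hsub : M + (1 / 4 : ℝ) • (B - A) - (M - (1 / 4 : ℝ) • (B - A)) = (1 / 2 : ℝ) • (B - A) := by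
    module
  have hne := sub_ne_add_of_ne_zero M (smul_ne_zero (by norm_num : (1 / 4 : ℝ) ≠ 0)
    (sub_ne_zero.mpr hAB.symm))
  have hL : 0 < ‖B - A‖ := norm_sub_pos_iff.mpr hAB.symm
  have hcs : |⟪y - P, u⟫| ≤ ‖B - A‖ / 8 := by
    refine (abs_real_inner_le_norm _ _).trans ?_
    rwa [norm_axisDir hAB, mul_one]
  have hBAu : ⟪B - A, u⟫ = ‖B - A‖ := by
    rw [hu, axisDir, real_inner_smul_right, real_inner_self_eq_norm_sq]; field_simp
  have hyM : ⟪y - M, u⟫ = ⟪y - P, u⟫ + σ / 2 * ‖B - A‖ := by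
    rw [show y - M = (y - P) + (σ / 2) • (B - A) by simp only [P]; abel, inner_add_left,
      real_inner_smul_left, hBAu]
  rw [axC_rigidChartInv hd hne, midpoint_sub_add, axisDir_eq_of_sub_eq_smul (by norm_num) hsub,
    hsub, norm_smul, Real.norm_of_nonneg (by norm_num), hyM, mul_div_assoc',
    le_div_iff₀ (by positivity)]
  have := mul_self_eq_one_of_abs_eq_one hσ
  nlinarith [mul_le_abs_of_abs_eq_one hσ (-⟪y - P, u⟫), abs_neg ⟪y - P, u⟫]

lemma norm_radC_rigidChartInv_middleHalf_lt_one (hd : 0 < d) {A B : 𝔼 d} (hAB : A ≠ B) {ρ : ℝ}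
    (hρ : 0 < ρ) {y : 𝔼 d} (hy : ‖y - A‖ + ‖B - A‖ / 2 < ρ) :
    ‖radC (rigidChartInv (midpoint ℝ A B - (1 / 4 : ℝ) • (B - A))
      (midpoint ℝ A B + (1 / 4 : ℝ) • (B - A)) ρ y)‖ < 1 := by
  refine (norm_radC_rigidChartInv_le hd (sub_ne_add_of_ne_zero _
    (smul_ne_zero (by norm_num) (sub_ne_zero.mpr hAB.symm))) hρ y).trans_lt ?_
  rw [midpoint_sub_add, div_lt_one hρ]
  have hmid : ‖A - midpoint ℝ A B‖ = ‖B - A‖ / 2 := by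
    rw [← dist_eq_norm, dist_left_midpoint, dist_eq_norm, norm_sub_rev, Real.norm_two]; ring
  calc ‖y - midpoint ℝ A B‖ ≤ ‖y - A‖ + ‖A - midpoint ℝ A B‖ :=
        norm_sub_le_norm_sub_add_norm_sub _ _ _
    _ < ρ := by rwa [hmid]

section BiLipschitz

variable (hd : 0 < d) {κ : ℝ} (hκ : 0 < κ) {Ω : Set (𝔼 d)} {f : 𝔼 d → 𝔼 d}
  (hlip : ∀ x ∈ Ω, ∀ y ∈ Ω, dist (f x) (f y) ≤ κ * dist x y)
  {a b : 𝔼 d} (hab : a ≠ b) {ρ : ℝ} (hρ : 0 < ρ) (hcl : closure (rigidCyl a b ρ) ⊆ Ω)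
include hd hκ hlip hab hρ hcl

lemma norm_apply_rigidChart_sub_le {x : 𝔼 d} (hx : x ∈ closure (stdCyl d)) {t : ℝ} (ht : |t| ≤ 1) :
    ‖f (rigidChart a b ρ x) - f (rigidChart a b ρ (t • eAx d))‖ ≤
      κ * (ρ + dist a b / 2 * |axC x - t|) := by
  rw [← dist_eq_norm]
  refine (hlip _ (hcl (rigidChart_mem_closure_rigidCyl hd hab hρ hx)) _
    (hcl (rigidChart_mem_closure_rigidCyl hd hab hρ (smul_eAx_mem_closure_stdCyl hd ht)))).trans ?_
  have := norm_rigidChart_sub_rigidChart_smul_eAx_le hd (a := a) (b := b) hρ.le hx t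
  rw [← dist_eq_norm, ← dist_eq_norm, dist_comm b] at this
  gcongr

omit hκ in
lemma dist_apply_le_of_lipschitzOn : dist (f a) (f b) ≤ κ * dist a b :=
  hlip a (hcl (left_mem_closure_rigidCyl hd hab hρ)) b (hcl (right_mem_closure_rigidCyl hd hab hρ))

lemma norm_radC_rigidChartInv_apply_lt_one (hAB : f a ≠ f b) (hρab : ρ < dist a b)
    {x : 𝔼 d} (hx : x ∈ closure (stdCyl d)) :
    ‖radC (rigidChartInv (midpoint ℝ (f a) (f b) - (1 / 4 : ℝ) • (f b - f a))
      (midpoint ℝ (f a) (f b) + (1 / 4 : ℝ) • (f b - f a)) (4 * κ * dist a b)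
      (f (rigidChart a b ρ x)))‖ < 1 := by
  refine norm_radC_rigidChartInv_middleHalf_lt_one hd hAB (by nlinarith) ?_
  have hxa := norm_apply_rigidChart_sub_le hd hκ hlip hab hρ hcl hx (t := -1) (by norm_num)
  rw [rigidChart_smul_eAx hd hab, midpoint_add_neg_half_smul_sub] at hxa
  have hax : |axC x - -1| ≤ 2 := by
    have := ((closure_stdCyl hd).subset hx).2
    rw [abs_le] at this ⊢; constructor <;> linarith
  have hD : ‖f b - f a‖ ≤ κ * dist a b := by
    rw [← dist_eq_norm, dist_comm]; exact dist_apply_le_of_lipschitzOn hd hlip hab hρ hcl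
  calc ‖f (rigidChart a b ρ x) - f a‖ + ‖f b - f a‖ / 2
      ≤ κ * (ρ + dist a b / 2 * 2) + κ * dist a b / 2 := by
        gcongr; exact hxa.trans (by gcongr)
    _ < 4 * κ * dist a b := by nlinarith

lemma three_halves_le_mul_axC_rigidChartInv_apply (hL : dist a b ≤ κ * dist (f a) (f b))
    (hρab : 16 * κ ^ 2 * ρ < dist a b) {τ : ℝ} (hτ : |τ| = 1) {x : 𝔼 d}
    (hx : x ∈ closure (stdCyl d)) (hxτ : 1 - 1 / (8 * κ ^ 2) ≤ τ * axC x) (r : ℝ) :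
    3 / 2 ≤ τ * axC (rigidChartInv (midpoint ℝ (f a) (f b) - (1 / 4 : ℝ) • (f b - f a))
      (midpoint ℝ (f a) (f b) + (1 / 4 : ℝ) • (f b - f a)) r (f (rigidChart a b ρ x))) := by
  refine three_halves_le_mul_axC_rigidChartInv hd (ne_of_dist_le_mul_dist hab hL) _ hτ ?_
  rw [← apply_midpoint_add_sign_smul_sub f a b hτ, ← rigidChart_smul_eAx hd hab (ρ := ρ)]
  rw [dist_eq_norm (f a), norm_sub_rev] at hL
  have hκρ : κ * ρ < dist a b / (16 * κ) := by rw [lt_div_iff₀ (by positivity)]; nlinarith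
  have hLD : dist a b / (16 * κ) ≤ ‖f b - f a‖ / 16 := by
    rw [div_le_div_iff₀ (by positivity) (by norm_num)]; nlinarith
  calc ‖f (rigidChart a b ρ x) - f (rigidChart a b ρ (τ • eAx d))‖
      ≤ κ * (ρ + dist a b / 2 * |axC x - τ|) :=
        norm_apply_rigidChart_sub_le hd hκ hlip hab hρ hcl hx hτ.le
    _ ≤ κ * (ρ + dist a b / 2 * (1 / (8 * κ ^ 2))) := by
        gcongr; exact abs_axC_sub_le_of_le_mul_axC hd hτ hx hxτ
    _ = κ * ρ + dist a b / (16 * κ) := by field_simp; ring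
    _ ≤ ‖f b - f a‖ / 8 := by linarith

theorem crossesStdCyl_of_biLipschitz (hΩ : IsOpen Ω) (hinj : InjOn f Ω)
    (hL : dist a b ≤ κ * dist (f a) (f b)) (hρab : 16 * κ ^ 2 * ρ < dist a b) :
    CrossesStdCyl
      ((rigidChartInv (midpoint ℝ (f a) (f b) - (1 / 4 : ℝ) • (f b - f a))
        (midpoint ℝ (f a) (f b) + (1 / 4 : ℝ) • (f b - f a)) (4 * κ * dist a b) ∘ f) ∘
        rigidChart a b ρ) (1 / (8 * κ ^ 2)) (3 / 2) := by
  have hψΩ : ∀ x ∈ closure (stdCyl d), rigidChart a b ρ x ∈ Ω := fun x hx =>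
    hcl (rigidChart_mem_closure_rigidCyl hd hab hρ hx)
  have hL0 : 0 < dist a b := dist_pos.mpr hab
  have hκ1 : 1 ≤ κ := by
    have h := hL.trans (mul_le_mul_of_nonneg_left (dist_apply_le_of_lipschitzOn hd hlip hab hρ hcl)
      hκ.le)
    nlinarith [le_of_mul_le_mul_right (by linarith : 1 * dist a b ≤ (κ * κ) * dist a b) hL0]
  have hρL : ρ < dist a b := by nlinarith [mul_le_mul_of_nonneg_right hκ1 hρ.le]
  have hAB := ne_of_dist_le_mul_dist hab hL
  have hne₁ := sub_ne_add_of_ne_zero (midpoint ℝ (f a) (f b))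
    (smul_ne_zero (by norm_num : (1 / 4 : ℝ) ≠ 0) (sub_ne_zero.mpr hAB.symm))
  have hfc : ContinuousOn f Ω :=
    (LipschitzOnWith.of_dist_le_mul (K := ⟨κ, hκ.le⟩) hlip).continuousOn
  refine ⟨by positivity, (div_le_one (by positivity)).mpr (by nlinarith), by norm_num,
    fun x hx => ?_, fun x hx y hy h => ?_,
    fun x hx => norm_radC_rigidChartInv_apply_lt_one hd hκ hlip hab hρ hcl hAB hρL hx,
    fun τ hτ x hx hxτ =>
      three_halves_le_mul_axC_rigidChartInv_apply hd hκ hlip hab hρ hcl hL hρab hτ hx hxτ _⟩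
  · exact ((continuous_rigidChartInv _ _ _).continuousAt.comp
      (hfc.continuousAt (hΩ.mem_nhds (hψΩ x hx)))).comp (continuous_rigidChart a b ρ).continuousAt
  · exact (leftInverse_rigidChartInv hd hab hρ.ne').injective (hinj (hψΩ x hx) (hψΩ y hy)
      ((rightInverse_rigidChartInv hd hne₁ (by positivity)).injective h))

end BiLipschitz

/-- **Bi-Lipschitz cylinder separation**: let `f : Ω₀ → Ω₁` be a bi-Lipschitz homeomorphism
between open domains of `ℝ^d` (`d ≥ 2`) with bi-Lipschitz constant `κ`.  There are constants
`K₀, K₁ > 0`, depending only on `d` and `κ`, such that every rigid solid cylinder `C₀` with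
closure contained in `Ω₀` and `rad C₀ < K₀ · len C₀` is mapped by `f` across some rigid solid
cylinder `C₁` with `rad C₁ ≤ K₁ · len C₁`. -/
theorem bilipschitz_cylinder_separation (d : ℕ) (hd : 2 ≤ d) (κ : ℝ) (hκ : 0 < κ) :
    ∃ K₀ K₁ : ℝ, 0 < K₀ ∧ 0 < K₁ ∧
      ∀ (Ω₀ Ω₁ : Set (EuclideanSpace ℝ (Fin d))), IsOpen Ω₀ → IsOpen Ω₁ →
      ∀ f : EuclideanSpace ℝ (Fin d) → EuclideanSpace ℝ (Fin d),
        Set.BijOn f Ω₀ Ω₁ →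
        (∀ x ∈ Ω₀, ∀ y ∈ Ω₀, dist (f x) (f y) ≤ κ * dist x y) →
        (∀ x ∈ Ω₀, ∀ y ∈ Ω₀, dist x y ≤ κ * dist (f x) (f y)) →
        ∀ (a₀ b₀ : EuclideanSpace ℝ (Fin d)) (ρ₀ : ℝ), a₀ ≠ b₀ → 0 < ρ₀ →
          closure (rigidCyl a₀ b₀ ρ₀) ⊆ Ω₀ →
          ρ₀ < K₀ * dist a₀ b₀ →
          ∃ (a₁ b₁ : EuclideanSpace ℝ (Fin d)) (ρ₁ : ℝ), a₁ ≠ b₁ ∧ 0 < ρ₁ ∧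
            RigidMapsAcross f a₀ b₀ ρ₀ a₁ b₁ ρ₁ ∧
            ρ₁ ≤ K₁ * dist a₁ b₁ := by
  have hd0 : 0 < d := by omega
  refine ⟨1 / (16 * κ ^ 2), 8 * κ ^ 2, by positivity, by positivity, ?_⟩
  intro Ω₀ Ω₁ hΩ₀ _ f hbij hlip hlipinv a₀ b₀ ρ₀ hab₀ hρ₀ hcl hρ₀K
  have hρ₀L : 16 * κ ^ 2 * ρ₀ < dist a₀ b₀ := by
    rwa [one_div, inv_mul_eq_div, lt_div_iff₀ (by positivity), mul_comm] at hρ₀K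
  have ha := hcl (left_mem_closure_rigidCyl hd0 hab₀ hρ₀)
  have hb := hcl (right_mem_closure_rigidCyl hd0 hab₀ hρ₀)
  have hL := hlipinv a₀ ha b₀ hb
  have hAB : f a₀ ≠ f b₀ := hbij.injOn.ne ha hb hab₀
  have hab₁ := sub_ne_add_of_ne_zero (midpoint ℝ (f a₀) (f b₀))
    (smul_ne_zero (by norm_num : (1 / 4 : ℝ) ≠ 0) (sub_ne_zero.mpr hAB.symm))
  have hρ₁ : 0 < 4 * κ * dist a₀ b₀ := by have := dist_pos.mpr hab₀; positivity
  refine ⟨_, _, _, hab₁, hρ₁, rigidMapsAcross_of_mapsAcrossStd hd0 hab₀ hρ₀ hab₁ hρ₁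
    ((crossesStdCyl_of_biLipschitz hd0 hκ hlip hab₀ hρ₀ hcl hΩ₀ hbij.injOn hL hρ₀L).mapsAcrossStd
      hd0), ?_⟩
  rw [dist_midpoint_sub_smul_add_smul]
  nlinarith
end
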